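/- arXiv:0805.0775 — 9 statements merged into one kernel-verified Lean document; each statement's English description precedes it below -/
import Mathlib

section
/- Fix a positive odd integer h and an integer r, and for an integer t and an odd positive integer n let c_t(n) = Σ_{α mod n, gcd(t²−α,n)=1, α ≡ r mod gcd(n,h)} (α|n), where (α|n) is the Jacobi symbol. Then c_t is multiplicative on odd arguments: for all coprime odd positive integers m and n, c_t(mn) = c_t(m)·c_t(n). -/
open scoped Classical

/-- The character sum `c_t(n) = Σ_{α mod n, (t²-α,n)=1, α ≡ r mod (n,h)} (α|n)`. -/
noncomputable def cFun (r : ℤ) (h : ℕ) (t : ℤ) (n : ℕ) : ℤ :=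
  ∑ α ∈ (Finset.range n).filter
      (fun α => Int.gcd (t ^ 2 - (α : ℤ)) (n : ℤ) = 1 ∧
        (α : ℤ) ≡ r [ZMOD (Nat.gcd n h : ℤ)]),
    jacobiSym (α : ℤ) n

/-!
The summand at `α` depends only on `α mod n`, and for coprime `m, n` it is multiplicative in the
modulus: `gcd(t² - α, mn) = 1` splits into the two coprimality conditions, the congruence modulo
`gcd(mn, h) = gcd(m, h) gcd(n, h)` splits by the Chinese remainder theorem, and the Jacobi symbol
is multiplicative in its modulus. The Chinese remainder bijection `ℤ/mn ≃ ℤ/m × ℤ/n` then factors the sum.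
-/

open Finset Function

theorem Nat.Coprime.sum_range_mul_of_periodic {M : Type*} [CommSemiring M] {m n : ℕ}
    (hcop : m.Coprime n) {f g : ℕ → M} (hf : Periodic f m) (hg : Periodic g n) :
    ∑ x ∈ range (m * n), f x * g x = (∑ a ∈ range m, f a) * ∑ b ∈ range n, g b := by
  rcases eq_or_ne m 0 with rfl | hm
  · simp
  rcases eq_or_ne n 0 with rfl | hn
  · simp
  rw [sum_mul_sum, ← sum_product']
  let crt (p : ℕ × ℕ) : ℕ := Nat.chineseRemainder hcop p.1 p.2
  refine sum_nbij' (fun x => (x % m, x % n)) crt ?_ ?_ ?_ ?_ ?_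
  · intro x _
    simp [Nat.mod_lt, Nat.pos_of_ne_zero hm, Nat.pos_of_ne_zero hn]
  · intro p _
    simpa using Nat.chineseRemainder_lt_mul hcop p.1 p.2 hm hn
  · intro x hx
    have hx' : x ≡ crt (x % m, x % n) [MOD m * n] :=
      Nat.chineseRemainder_modEq_unique hcop (Nat.mod_modEq x m).symm (Nat.mod_modEq x n).symm
    exact (hx'.eq_of_lt_of_lt (mem_range.mp hx)
      (Nat.chineseRemainder_lt_mul hcop _ _ hm hn)).symm
  · rintro ⟨a, b⟩ hab
    obtain ⟨ha, hb⟩ := mem_product.mp hab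
    have ⟨hcrt_a, hcrt_b⟩ := (Nat.chineseRemainder hcop a b).2
    simp only [crt, Prod.mk.injEq]
    exact ⟨Eq.trans hcrt_a (Nat.mod_eq_of_lt (mem_range.mp ha)),
      Eq.trans hcrt_b (Nat.mod_eq_of_lt (mem_range.mp hb))⟩
  · intro x _
    rw [hf.map_mod_nat, hg.map_mod_nat]

noncomputable def cTerm (r : ℤ) (h : ℕ) (t : ℤ) (n : ℕ) (a : ℤ) : ℤ :=
  if Int.gcd (t ^ 2 - a) n = 1 ∧ a ≡ r [ZMOD (Nat.gcd n h : ℤ)] then jacobiSym a n else 0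

theorem cFun_eq_sum_cTerm (r : ℤ) (h : ℕ) (t : ℤ) (n : ℕ) :
    cFun r h t n = ∑ a ∈ range n, cTerm r h t n a := by
  -- the ascriptions `(α : ℤ)` in `cFun` make it sum over the image of `range n` in `ℤ`
  have hrange : (do let a ← range n; pure (a : ℤ)) = (range n).image (Nat.cast : ℕ → ℤ) := by
    ext; simp
  rw [cFun, hrange, sum_filter, sum_image Nat.cast_injective.injOn]
  rfl

theorem cTerm_congr (r : ℤ) (h : ℕ) (t : ℤ) (n : ℕ) {a b : ℤ} (hab : a ≡ b [ZMOD n]) :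
    cTerm r h t n a = cTerm r h t n b := by
  have hgcd : Int.gcd (t ^ 2 - a) n = Int.gcd (t ^ 2 - b) n := by
    rw [← Int.gcd_emod, hab.sub_left (t ^ 2), Int.gcd_emod]
  have hcong : a ≡ r [ZMOD (Nat.gcd n h : ℤ)] ↔ b ≡ r [ZMOD (Nat.gcd n h : ℤ)] :=
    (hab.of_dvd (Int.natCast_dvd_natCast.mpr (Nat.gcd_dvd_left n h))).congr_left
  simp only [cTerm, hgcd, hcong, jacobiSym.mod_left' hab]

theorem cTerm_mul (r : ℤ) (h : ℕ) (t : ℤ) {m n : ℕ} (hm : m ≠ 0) (hn : n ≠ 0)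
    (hcop : m.Coprime n) (a : ℤ) :
    cTerm r h t (m * n) a = cTerm r h t m a * cTerm r h t n a := by
  have hgcd : Int.gcd (t ^ 2 - a) (m * n : ℕ) = 1 ↔
      Int.gcd (t ^ 2 - a) m = 1 ∧ Int.gcd (t ^ 2 - a) n = 1 := by
    simp only [← Int.isCoprime_iff_gcd_eq_one, Nat.cast_mul, IsCoprime.mul_right_iff]
  have hcong : a ≡ r [ZMOD (Nat.gcd (m * n) h : ℤ)] ↔
      a ≡ r [ZMOD (Nat.gcd m h : ℤ)] ∧ a ≡ r [ZMOD (Nat.gcd n h : ℤ)] := by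
    have hcop' : (Nat.gcd m h).Coprime (Nat.gcd n h) :=
      (hcop.coprime_dvd_left (Nat.gcd_dvd_left m h)).coprime_dvd_right (Nat.gcd_dvd_left n h)
    rw [Nat.gcd_comm, hcop.gcd_mul, Nat.gcd_comm h m, Nat.gcd_comm h n, Nat.cast_mul]
    exact (Int.modEq_and_modEq_iff_modEq_mul (by simpa using hcop')).symm
  simp only [cTerm, hgcd, hcong, jacobiSym.mul_right' _ hm hn]
  split_ifs <;> simp_all

theorem stmt6_general (h : ℕ) (r : ℤ) (t : ℤ) (m n : ℕ) (hcop : Nat.Coprime m n) :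
    cFun r h t (m * n) = cFun r h t m * cFun r h t n := by
  rcases eq_or_ne m 0 with rfl | hm
  · simp [cFun_eq_sum_cTerm]
  rcases eq_or_ne n 0 with rfl | hn
  · simp [cFun_eq_sum_cTerm]
  have hperiodic (k : ℕ) : Periodic (fun a : ℕ => cTerm r h t k a) k := fun a =>
    cTerm_congr r h t k (by simp [Int.ModEq])
  simp only [cFun_eq_sum_cTerm, cTerm_mul r h t hm hn hcop]
  exact hcop.sum_range_mul_of_periodic (hperiodic m) (hperiodic n)

/-- `c_t` is multiplicative on coprime odd positive arguments. -/
theorem stmt6 (h : ℕ) (hpos : 0 < h) (hodd : Odd h) (r : ℤ) (t : ℤ)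
    (m n : ℕ) (hm : 0 < m) (hn : 0 < n) (hmodd : Odd m) (hnodd : Odd n)
    (hcop : Nat.Coprime m n) :
    cFun r h t (m * n) = cFun r h t m * cFun r h t n :=
  stmt6_general h r t m n hcop
end

section
/- Fix a positive odd integer h and an integer r, and for an integer t and an odd positive integer n let c_t(n) = Σ_{α mod n, gcd(t²−α,n)=1, α ≡ r mod gcd(n,h)} (α|n), where (α|n) is the Jacobi symbol. Let p be an odd prime with p | h, let t be an integer with p ∤ (t²−r), and let ℓ ≥ 1. Then c_t(p^ℓ) = ( p^ℓ / gcd(p^ℓ, h) ) · (r|p)^ℓ, where (r|p) is the Legendre symbol (equal to 0 when p | r). -/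
/-!
Since `p` divides `gcd(p^ℓ, h)`, every `α ≡ r (mod gcd(p^ℓ, h))` is `≡ r (mod p)`. Hence
`p ∤ t² - α`, so the coprimality condition is automatic, and `(α | p^ℓ) = (r | p)^ℓ`. The sum is
therefore `(r | p)^ℓ` times the number of `α mod p^ℓ` in one residue class modulo
`gcd(p^ℓ, h)`, which is `p^ℓ / gcd(p^ℓ, h)`.
-/

open scoped Classical

open Finset

/- In `cFun` the summation variable is an integer: `range n` is lifted to `Finset ℤ` through the
`Finset` monad. -/
lemma cFun_eq_sum_range (r : ℤ) (h : ℕ) (t : ℤ) (n : ℕ) :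
    cFun r h t n = ∑ α ∈ (range n).filter (fun α : ℕ =>
      Int.gcd (t ^ 2 - α) n = 1 ∧ (α : ℤ) ≡ r [ZMOD (n.gcd h : ℤ)]), jacobiSym α n := by
  have hlift : (do let a ← range n; pure (a : ℤ)) = (range n).map Nat.castEmbedding := by
    rw [bind_pure_comp, Finset.fmap_def, map_eq_image]
    congr!
  rw [cFun, hlift, filter_map, sum_map]
  rfl

lemma card_filter_range_intModEq_of_dvd {g N : ℕ} (hgN : g ∣ N) (r : ℤ) :
    #{α ∈ range N | ((α : ℕ) : ℤ) ≡ r [ZMOD g]} = N / g := by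
  rcases g.eq_zero_or_pos with rfl | hg
  · simp [Nat.eq_zero_of_zero_dvd hgN]
  set v := (r % g).toNat
  have hv : (v : ℤ) ≡ r [ZMOD g] := by
    rw [Int.toNat_of_nonneg (Int.emod_nonneg r (by positivity))]
    exact Int.mod_modEq r g
  have hcond : ∀ α : ℕ, (α : ℤ) ≡ r [ZMOD g] ↔ α ≡ v [MOD g] := fun α => by
    rw [← Int.natCast_modEq_iff]
    exact ⟨fun hα => hα.trans hv.symm, fun hα => hα.trans hv⟩
  simp_rw [hcond, ← Nat.count_eq_card_filter_range, Nat.count_modEq_card _ hg,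
    Nat.mod_eq_zero_of_dvd hgN]
  simp

lemma Int.gcd_natCast_prime_pow_eq_one {p : ℕ} (hp : p.Prime) {a : ℤ} (ha : ¬(p : ℤ) ∣ a)
    (ℓ : ℕ) : Int.gcd a ((p ^ ℓ : ℕ) : ℤ) = 1 := by
  rw [← Int.isCoprime_iff_gcd_eq_one, Nat.cast_pow]
  exact ((Nat.prime_iff_prime_int.mp hp).coprime_iff_not_dvd.mpr ha).symm.pow_right

lemma jacobiSym_pow_right_of_modEq {p : ℕ} {a b : ℤ} (hab : a ≡ b [ZMOD p]) (ℓ : ℕ) :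
    jacobiSym a (p ^ ℓ) = jacobiSym b p ^ ℓ := by
  rw [jacobiSym.pow_right, jacobiSym.mod_left' hab]

theorem stmt7_general (h : ℕ) (r : ℤ)
    (p : ℕ) (hp : p.Prime) (hph : p ∣ h)
    (t : ℤ) (ht : ¬ (p : ℤ) ∣ (t ^ 2 - r)) (ℓ : ℕ) (hℓ : 1 ≤ ℓ) :
    cFun r h t (p ^ ℓ) = ((p ^ ℓ / Nat.gcd (p ^ ℓ) h : ℕ) : ℤ) * (jacobiSym r p) ^ ℓ := by
  have hp_dvd_gcd : (p : ℤ) ∣ (Nat.gcd (p ^ ℓ) h : ℤ) :=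
    Int.natCast_dvd_natCast.mpr (Nat.dvd_gcd (dvd_pow_self p (by omega)) hph)
  have hmod_p : ∀ α : ℕ, (α : ℤ) ≡ r [ZMOD (Nat.gcd (p ^ ℓ) h : ℤ)] → (α : ℤ) ≡ r [ZMOD p] :=
    fun α hα => hα.of_dvd hp_dvd_gcd
  have hcoprime : ∀ α : ℕ, (α : ℤ) ≡ r [ZMOD (Nat.gcd (p ^ ℓ) h : ℤ)] →
      Int.gcd (t ^ 2 - α) ((p ^ ℓ : ℕ) : ℤ) = 1 := fun α hα =>
    Int.gcd_natCast_prime_pow_eq_one hp (((hmod_p α hα).sub_left (t ^ 2)).dvd_iff.not.mpr ht) ℓ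
  rw [cFun_eq_sum_range, filter_congr (fun α _ => and_iff_right_of_imp (hcoprime α)),
    sum_congr rfl (fun α hα => jacobiSym_pow_right_of_modEq (hmod_p α (mem_filter.mp hα).2) ℓ),
    sum_const, card_filter_range_intModEq_of_dvd (Nat.gcd_dvd_left _ _), nsmul_eq_mul]

/-- for `p` an odd prime dividing `h`, `t` with `p ∤ t² - r` and `ℓ ≥ 1`,
`c_t(p^ℓ) = (p^ℓ/(p^ℓ,h))·(r|p)^ℓ`. -/
theorem stmt7 (h : ℕ) (hpos : 0 < h) (hodd : Odd h) (r : ℤ)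
    (p : ℕ) (hp : p.Prime) (hp2 : p ≠ 2) (hph : p ∣ h)
    (t : ℤ) (ht : ¬ (p : ℤ) ∣ (t ^ 2 - r)) (ℓ : ℕ) (hℓ : 1 ≤ ℓ) :
    cFun r h t (p ^ ℓ) = ((p ^ ℓ / Nat.gcd (p ^ ℓ) h : ℕ) : ℤ) * (jacobiSym r p) ^ ℓ :=
  stmt7_general h r p hp hph t ht ℓ hℓ
end

section
/- Fix a positive odd integer h and an integer r, and for an integer t and an odd positive integer n let c_t(n) = Σ_{α mod n, gcd(t²−α,n)=1, α ≡ r mod gcd(n,h)} (α|n), where (α|n) is the Jacobi symbol. Let p be an odd prime with p ∤ h, let t be an integer, and let ℓ ≥ 1. Then: c_t(p^ℓ) = 0 if p | t and ℓ is odd; c_t(p^ℓ) = −p^{ℓ−1} if p ∤ t and ℓ is odd; c_t(p^ℓ) = p^ℓ − p^{ℓ−1} if p | t and ℓ is even; c_t(p^ℓ) = p^ℓ − 2p^{ℓ−1} if p ∤ t and ℓ is even. -/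
open scoped Classical

/-!
Since `p ∤ h`, the congruence condition is vacuous. Both remaining ingredients depend only on
`α mod p`: `gcd(t² - α, p^ℓ) = 1` iff `α ≢ t² (mod p)`, and `(α | p^ℓ) = χ(α)^ℓ` with `χ` the
quadratic character of `𝔽_p`. Hence `c_t(p^ℓ) = p^(ℓ-1) Σ_{a ≠ t²} χ(a)^ℓ`. The full sum
`Σ_a χ(a)^ℓ` is `0` for odd `ℓ` (orthogonality) and `p - 1` for even `ℓ`, and the omitted term
`χ(t²)^ℓ` is `0` or `1` according as `p ∣ t` or not.
-/

open Finset

lemma sum_range_natCast_zmod {M : Type*} [AddCommMonoid M] (p : ℕ) [NeZero p] (F : ZMod p → M) :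
    ∑ x ∈ range p, F x = ∑ a, F a :=
  sum_nbij' (↑) ZMod.val (fun _ _ ↦ mem_univ _) (fun a _ ↦ mem_range.mpr a.val_lt)
    (fun _ hx ↦ ZMod.val_cast_of_lt (mem_range.mp hx)) (fun a _ ↦ ZMod.natCast_zmod_val a)
    (fun _ _ ↦ rfl)

lemma sum_range_mul_natCast_zmod {M : Type*} [AddCommMonoid M] (p : ℕ) [NeZero p]
    (F : ZMod p → M) (N : ℕ) : ∑ x ∈ range (N * p), F x = N • ∑ a, F a := by
  induction N with
  | zero => simp
  | succ N ih =>
    rw [add_mul, one_mul, sum_range_add, ih, succ_nsmul, ← sum_range_natCast_zmod p F]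
    simp

-- `cFun` really sums over the image of `range n` in `ℤ`, through the monadic coercion.
lemma cFun_eq_sum_of_coprime {r : ℤ} {h n : ℕ} (t : ℤ) (hn : n.Coprime h) :
    cFun r h t n = ∑ α ∈ range n with Int.gcd (t ^ 2 - (α : ℕ)) n = 1, jacobiSym (α : ℕ) n := by
  simp only [cFun, bind_def, pure_def, sup_singleton_apply, filter_image, hn.gcd_eq_one,
    Nat.cast_one, Int.modEq_one, and_true]
  exact @sum_image _ _ _ _ _ (Classical.decEq ℤ) _ _ fun _ _ _ _ ↦ Int.ofNat_inj.mp

lemma Int.gcd_prime_pow_eq_one_iff {p ℓ : ℕ} (hp : p.Prime) (hℓ : ℓ ≠ 0) (a : ℤ) :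
    Int.gcd a (p ^ ℓ : ℕ) = 1 ↔ (a : ZMod p) ≠ 0 := by
  rw [← Int.isCoprime_iff_gcd_eq_one, Nat.cast_pow,
    IsCoprime.pow_right_iff (Nat.pos_of_ne_zero hℓ), Ne, ZMod.intCast_zmod_eq_zero_iff_dvd,
    isCoprime_comm, (Nat.prime_iff_prime_int.mp hp).coprime_iff_not_dvd]

lemma jacobiSym_prime_pow {p : ℕ} [Fact p.Prime] (a : ℤ) (ℓ : ℕ) :
    jacobiSym a (p ^ ℓ) = quadraticChar (ZMod p) a ^ ℓ := by
  rw [jacobiSym.pow_right, ← jacobiSym.legendreSym.to_jacobiSym, legendreSym]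

lemma cFun_prime_pow {r : ℤ} {h p ℓ : ℕ} [Fact p.Prime] (t : ℤ) (hph : ¬p ∣ h) (hℓ : 1 ≤ ℓ) :
    cFun r h t (p ^ ℓ) =
      p ^ (ℓ - 1) * ∑ a ∈ univ.erase ((t : ZMod p) ^ 2), quadraticChar (ZMod p) a ^ ℓ := by
  have hp : p.Prime := Fact.out
  have hcop : (p ^ ℓ).Coprime h := ((hp.coprime_iff_not_dvd).mpr hph).pow_left ℓ
  calc cFun r h t (p ^ ℓ)
      = ∑ α ∈ range (p ^ ℓ), if (α : ZMod p) ≠ (t : ZMod p) ^ 2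
          then quadraticChar (ZMod p) α ^ ℓ else 0 := by
        rw [cFun_eq_sum_of_coprime t hcop, sum_filter]
        refine sum_congr rfl fun α _ ↦ ?_
        simp only [Int.gcd_prime_pow_eq_one_iff hp (by omega : ℓ ≠ 0), jacobiSym_prime_pow,
          Int.cast_sub, Int.cast_pow, Int.cast_natCast, sub_ne_zero, ne_comm]
    _ = _ := by
        rw [← filter_ne' univ, sum_filter, ← Nat.cast_pow, ← nsmul_eq_mul,
          ← sum_range_mul_natCast_zmod, ← pow_sub_one_mul (by omega)]

section quadraticChar

variable {F : Type*} [Field F] [Fintype F] [DecidableEq F]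

lemma quadraticChar_pow_of_odd {ℓ : ℕ} (hℓ : Odd ℓ) (a : F) :
    quadraticChar F a ^ ℓ = quadraticChar F a := by
  obtain ⟨k, rfl⟩ := hℓ
  rcases eq_or_ne a 0 with rfl | ha
  · simp
  · rw [pow_succ, pow_mul, quadraticChar_sq_one ha, one_pow, one_mul]

lemma quadraticChar_pow_of_even {ℓ : ℕ} (hℓ : Even ℓ) (hℓ0 : ℓ ≠ 0) (a : F) :
    quadraticChar F a ^ ℓ = if a = 0 then 0 else 1 := by
  obtain ⟨k, rfl⟩ := hℓ
  rcases eq_or_ne a 0 with rfl | ha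
  · simp [zero_pow hℓ0]
  · rw [← two_mul, pow_mul, quadraticChar_sq_one ha, one_pow, if_neg ha]

lemma sum_quadraticChar_pow (hF : ringChar F ≠ 2) {ℓ : ℕ} (hℓ0 : ℓ ≠ 0) :
    ∑ a, quadraticChar F a ^ ℓ = if Even ℓ then (Fintype.card F : ℤ) - 1 else 0 := by
  split_ifs with hℓ
  · rw [sum_congr rfl fun a _ ↦ quadraticChar_pow_of_even hℓ hℓ0 a, sum_ite, sum_const_zero,
      zero_add, sum_const, filter_ne', card_erase_of_mem (mem_univ _), card_univ, nsmul_one,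
      Nat.cast_sub Fintype.card_pos, Nat.cast_one]
  · simp only [quadraticChar_pow_of_odd (Nat.not_even_iff_odd.mp hℓ)]
    exact quadraticChar_sum_zero hF

lemma quadraticChar_sq_pow {ℓ : ℕ} (hℓ0 : ℓ ≠ 0) (x : F) :
    quadraticChar F (x ^ 2) ^ ℓ = if x = 0 then 0 else 1 := by
  rcases eq_or_ne x 0 with rfl | hx
  · simp [hℓ0]
  · rw [quadraticChar_sq_one' hx, one_pow, if_neg hx]

end quadraticChar

theorem stmt8_general (h : ℕ) (r : ℤ)
    (p : ℕ) (hp : p.Prime) (hp2 : p ≠ 2) (hph : ¬ p ∣ h)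
    (t : ℤ) (ℓ : ℕ) (hℓ : 1 ≤ ℓ) :
    ((p : ℤ) ∣ t → Odd ℓ → cFun r h t (p ^ ℓ) = 0) ∧
    (¬ (p : ℤ) ∣ t → Odd ℓ → cFun r h t (p ^ ℓ) = -(p : ℤ) ^ (ℓ - 1)) ∧
    ((p : ℤ) ∣ t → Even ℓ → cFun r h t (p ^ ℓ) = (p : ℤ) ^ ℓ - (p : ℤ) ^ (ℓ - 1)) ∧
    (¬ (p : ℤ) ∣ t → Even ℓ →
      cFun r h t (p ^ ℓ) = (p : ℤ) ^ ℓ - 2 * (p : ℤ) ^ (ℓ - 1)) := by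
  have : Fact p.Prime := ⟨hp⟩
  have hchar : ringChar (ZMod p) ≠ 2 := by rwa [ZMod.ringChar_zmod_n]
  have hc := cFun_prime_pow (r := r) t hph hℓ
  rw [sum_erase_eq_sub (mem_univ _), sum_quadraticChar_pow hchar (by omega),
    quadraticChar_sq_pow (by omega), ZMod.card] at hc
  simp only [ZMod.intCast_zmod_eq_zero_iff_dvd] at hc
  have hpow : (p : ℤ) ^ (ℓ - 1) * p = p ^ ℓ := pow_sub_one_mul (by omega) _
  refine ⟨fun hd hl ↦ ?_, fun hd hl ↦ ?_, fun hd hl ↦ ?_, fun hd hl ↦ ?_⟩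
  · rw [hc, if_pos hd, if_neg (Nat.not_even_iff_odd.mpr hl)]; ring
  · rw [hc, if_neg hd, if_neg (Nat.not_even_iff_odd.mpr hl)]; ring
  · rw [hc, if_pos hd, if_pos hl]; linear_combination hpow
  · rw [hc, if_neg hd, if_pos hl]; linear_combination hpow

/-- the values of `c_t` at powers of odd primes `p ∤ h`. -/
theorem stmt8 (h : ℕ) (hpos : 0 < h) (hodd : Odd h) (r : ℤ)
    (p : ℕ) (hp : p.Prime) (hp2 : p ≠ 2) (hph : ¬ p ∣ h)
    (t : ℤ) (ℓ : ℕ) (hℓ : 1 ≤ ℓ) :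
    ((p : ℤ) ∣ t → Odd ℓ → cFun r h t (p ^ ℓ) = 0) ∧
    (¬ (p : ℤ) ∣ t → Odd ℓ → cFun r h t (p ^ ℓ) = -(p : ℤ) ^ (ℓ - 1)) ∧
    ((p : ℤ) ∣ t → Even ℓ → cFun r h t (p ^ ℓ) = (p : ℤ) ^ ℓ - (p : ℤ) ^ (ℓ - 1)) ∧
    (¬ (p : ℤ) ∣ t → Even ℓ →
      cFun r h t (p ^ ℓ) = (p : ℤ) ^ ℓ - 2 * (p : ℤ) ^ (ℓ - 1)) :=
  stmt8_general h r p hp hp2 hph t ℓ hℓ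
end

section
/- Let h be a positive odd integer, r an integer such that gcd(r,h) is squarefree, and m a positive integer. Then Σ_{d ≥ 1 odd, gcd(d,m)=1, gcd(d²,h) | r} μ(d) · φ(gcd(d²,h)) / φ(d²) = ∏_{p odd prime, p ∤ m, p ∥ h, p | r} (1 − 1/p) · ∏_{p odd prime, p ∤ mh} ( 1 − 1/(p(p−1)) ), where the series on the left converges absolutely and the infinite product on the right converges. -/
/-!
Write `f(d) = μ(d) φ((d², h)) / φ(d²)` on admissible `d` and `f(d) = 0` otherwise. This `f` is
multiplicative and `|f(d)| ≤ h d^(-3/2)`, since `φ(d²) = d φ(d)` and `d ≤ φ(d)²` for odd `d`; so its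
sum is the Euler product of the local factors `1 + f(p)` (`μ` kills higher prime powers). For
`p ∤ mh` odd this factor is `1 - 1/(p(p-1))`, for `p ∥ h` with `p ∤ m` and `p ∣ r` it is `1 - 1/p`,
and otherwise `f(p) = 0`: if `p² ∣ h` and `p` were admissible, `p²` would divide the squarefree
`gcd(r, h)`.
-/

open ArithmeticFunction Finset
open scoped ArithmeticFunction.Moebius Nat

theorem Nat.totient_sq (n : ℕ) : φ (n ^ 2) = n * φ n := by
  rcases n.eq_zero_or_pos with rfl | hn
  · simp
  have h := Nat.totient_gcd_mul_totient_mul n n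
  rw [Nat.gcd_self, ← sq] at h
  exact Nat.eq_of_mul_eq_mul_left (Nat.totient_pos.mpr hn) (by rw [h]; ring)

theorem Nat.le_totient_sq_of_odd {n : ℕ} (hn : Odd n) : n ≤ φ n ^ 2 := by
  induction n using Nat.recOnPosPrimePosCoprime with
  | zero => simp at hn
  | one => simp
  | prime_pow p k hp hk =>
    have hp3 : 3 ≤ p := by
      have := Nat.odd_iff.mp (hn.of_dvd_nat (dvd_pow_self p hk.ne'))
      have := hp.two_le
      omega
    have hp_le : p ≤ (p - 1) ^ 2 := by
      rw [sq]
      calc p ≤ 2 * (p - 1) := by omega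
        _ ≤ (p - 1) * (p - 1) := Nat.mul_le_mul_right _ (by omega)
    rw [Nat.totient_prime_pow hp hk]
    calc p ^ k = p ^ (k - 1) * p := by rw [← pow_succ, Nat.sub_add_cancel hk]
      _ ≤ p ^ (k - 1) * p ^ (k - 1) * (p - 1) ^ 2 := by
        rw [mul_assoc]
        exact Nat.mul_le_mul_left _ (hp_le.trans (Nat.le_mul_of_pos_left _ (by positivity)))
      _ = (p ^ (k - 1) * (p - 1)) ^ 2 := by ring
  | coprime a b _ _ hab iha ihb =>
    rw [Nat.odd_mul] at hn
    rw [Nat.totient_mul hab, mul_pow]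
    exact Nat.mul_le_mul (iha hn.1) (ihb hn.2)

theorem Nat.rpow_three_halves_le_totient_sq {n : ℕ} (hn : Odd n) :
    (n : ℝ) ^ (3 / 2 : ℝ) ≤ φ (n ^ 2) := by
  have hsqrt : √(n : ℝ) ≤ φ n := Real.sqrt_le_iff.mpr
    ⟨by positivity, by exact_mod_cast Nat.le_totient_sq_of_odd hn⟩
  rw [show (3 / 2 : ℝ) = 1 + 1 / 2 by norm_num, Real.rpow_add (by exact_mod_cast hn.pos),
    Real.rpow_one, ← Real.sqrt_eq_rpow, Nat.totient_sq, Nat.cast_mul]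
  gcongr

theorem Nat.gcd_prime_sq_eq_self {p h : ℕ} (hp : p.Prime) (hph : p ∣ h) (hp2h : ¬ p ^ 2 ∣ h) :
    Nat.gcd (p ^ 2) h = p := by
  obtain ⟨k, rfl⟩ := hph
  have hpk : ¬ p ∣ k := fun hk => hp2h (by rw [sq]; exact Nat.mul_dvd_mul_left p hk)
  rw [sq, Nat.gcd_mul_left, (hp.coprime_iff_not_dvd.mpr hpk).gcd_eq_one, mul_one]

theorem Int.natCast_mul_dvd_iff_of_coprime {a b : ℕ} {n : ℤ} (hab : a.Coprime b) :
    ((a * b : ℕ) : ℤ) ∣ n ↔ (a : ℤ) ∣ n ∧ (b : ℤ) ∣ n := by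
  push_cast
  exact ⟨fun hn => ⟨dvd_of_mul_right_dvd hn, dvd_of_mul_left_dvd hn⟩,
    fun hn => (Nat.isCoprime_iff_coprime.mpr hab).mul_dvd hn.1 hn.2⟩

theorem Nat.Coprime.gcd_sq_mul {a b : ℕ} (hab : a.Coprime b) (n : ℕ) :
    Nat.gcd ((a * b) ^ 2) n = Nat.gcd (a ^ 2) n * Nat.gcd (b ^ 2) n := by
  simp only [mul_pow, Nat.gcd_comm _ n]
  exact Nat.Coprime.gcd_mul n (hab.pow 2 2)

theorem Nat.Coprime.coprime_gcd_sq {a b : ℕ} (hab : a.Coprime b) (n : ℕ) :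
    (Nat.gcd (a ^ 2) n).Coprime (Nat.gcd (b ^ 2) n) :=
  ((hab.pow 2 2).coprime_dvd_left (Nat.gcd_dvd_left _ _)).coprime_dvd_right (Nat.gcd_dvd_left _ _)

theorem Nat.Prime.one_sub_one_div_ne_zero {p : ℕ} (hp : p.Prime) : 1 - 1 / (p : ℝ) ≠ 0 := by
  rw [one_div, sub_ne_zero, ne_comm, Ne, inv_eq_one]
  exact_mod_cast hp.ne_one

namespace SquareGcdSum

variable (h : ℕ) (r : ℤ) (m : ℕ)

-- An `abbrev`, so that `if Admissible ..` uses the `Decidable` instance of the unfolded condition.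
abbrev Admissible (d : ℕ) : Prop :=
  Odd d ∧ Nat.gcd d m = 1 ∧ ((Nat.gcd (d ^ 2) h : ℤ) ∣ r)

noncomputable def summand (d : ℕ) : ℝ :=
  if Admissible h r m d then (μ d : ℝ) * (φ (Nat.gcd (d ^ 2) h) : ℝ) / (φ (d ^ 2) : ℝ) else 0

def exceptionalPrimes : Finset ℕ :=
  h.primeFactors.filter (fun p => Odd p ∧ ¬ p ∣ m ∧ ¬ p ^ 2 ∣ h ∧ (p : ℤ) ∣ r)

noncomputable def eulerFactor (p : ℕ) : ℝ :=
  if p.Prime ∧ Odd p ∧ ¬ p ∣ m * h then 1 - 1 / ((p : ℝ) * ((p : ℝ) - 1)) else 1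

variable {h r m}

theorem prime_of_mem_exceptionalPrimes {p : ℕ} (hp : p ∈ exceptionalPrimes h r m) : p.Prime :=
  Nat.prime_of_mem_primeFactors (mem_filter.mp hp).1

theorem admissible_mul_iff {a b : ℕ} (hab : a.Coprime b) :
    Admissible h r m (a * b) ↔ Admissible h r m a ∧ Admissible h r m b := by
  simp only [Admissible, Nat.odd_mul, ← Nat.coprime_iff_gcd_eq_one, Nat.coprime_mul_iff_left,
    hab.gcd_sq_mul h, Int.natCast_mul_dvd_iff_of_coprime (hab.coprime_gcd_sq h)]
  tauto

theorem summand_mul {a b : ℕ} (hab : a.Coprime b) :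
    summand h r m (a * b) = summand h r m a * summand h r m b := by
  by_cases ha : Admissible h r m a
  · by_cases hb : Admissible h r m b
    · rw [summand, if_pos ((admissible_mul_iff hab).mpr ⟨ha, hb⟩), summand, if_pos ha, summand,
        if_pos hb, hab.gcd_sq_mul h, Nat.totient_mul (hab.coprime_gcd_sq h), mul_pow,
        Nat.totient_mul (hab.pow 2 2), isMultiplicative_moebius.map_mul_of_coprime hab]
      push_cast
      ring
    · simp [summand, admissible_mul_iff hab, hb]
  · simp [summand, admissible_mul_iff hab, ha]

theorem summand_zero : summand h r m 0 = 0 := by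
  simp [summand]

theorem summand_one : summand h r m 1 = 1 := by
  simp [summand]

theorem summand_prime_pow_eq_zero {p e : ℕ} (hp : p.Prime) (he : 2 ≤ e) :
    summand h r m (p ^ e) = 0 := by
  have hμ : μ (p ^ e) = 0 := moebius_eq_zero_of_not_squarefree fun hsq => by
    have := ((Nat.squarefree_pow_iff hp.ne_one (by omega)).mp hsq).2
    omega
  simp [summand, hμ]

theorem tsum_summand_prime_pow {p : ℕ} (hp : p.Prime) :
    ∑' e, summand h r m (p ^ e) = 1 + summand h r m p := by
  rw [tsum_eq_sum (s := range 2) fun e he =>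
    summand_prime_pow_eq_zero hp (by simp at he; omega)]
  simp [Finset.sum_range_succ, summand_one]

theorem summand_prime_of_not_dvd {p : ℕ} (hp : p.Prime) (hodd : Odd p) (hpmh : ¬ p ∣ m * h) :
    summand h r m p = -(1 / ((p : ℝ) * ((p : ℝ) - 1))) := by
  have hpm : ¬ p ∣ m := fun hpm => hpmh (dvd_mul_of_dvd_left hpm h)
  have hph : ¬ p ∣ h := fun hph => hpmh (dvd_mul_of_dvd_right hph m)
  have hgcd : Nat.gcd (p ^ 2) h = 1 := (hp.coprime_iff_not_dvd.mpr hph).pow_left 2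
  rw [summand, if_pos ⟨hodd, hp.coprime_iff_not_dvd.mpr hpm, by simp [hgcd]⟩, hgcd,
    Nat.totient_one, Nat.totient_sq, Nat.totient_prime hp, moebius_apply_prime hp]
  push_cast [Nat.cast_pred hp.pos]
  ring

theorem summand_prime_of_mem {p : ℕ} (hp : p ∈ exceptionalPrimes h r m) :
    summand h r m p = -(1 / (p : ℝ)) := by
  obtain ⟨hph, hodd, hpm, hp2h, hpr⟩ := mem_filter.mp hp
  have hp := Nat.prime_of_mem_primeFactors hph
  have hgcd := Nat.gcd_prime_sq_eq_self hp (Nat.dvd_of_mem_primeFactors hph) hp2h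
  have hp1 : (p : ℝ) - 1 ≠ 0 := sub_ne_zero.mpr (by exact_mod_cast hp.ne_one)
  rw [summand, if_pos ⟨hodd, hp.coprime_iff_not_dvd.mpr hpm, by rwa [hgcd]⟩, hgcd,
    Nat.totient_sq, Nat.totient_prime hp, moebius_apply_prime hp]
  push_cast [Nat.cast_pred hp.pos]
  field_simp

theorem summand_prime_eq_zero (hsf : Squarefree (Int.gcd r (h : ℤ))) {p : ℕ} (hp : p.Prime)
    (hpD : p ∉ exceptionalPrimes h r m) (hpE : ¬ (Odd p ∧ ¬ p ∣ m * h)) :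
    summand h r m p = 0 := by
  rw [summand, if_neg]
  rintro ⟨hodd, hpm, hgcd⟩
  have hph : p ∣ h :=
    Nat.Coprime.dvd_of_dvd_mul_left hpm (not_not.mp fun hpmh => hpE ⟨hodd, hpmh⟩)
  by_cases hp2h : p ^ 2 ∣ h
  · rw [Nat.gcd_eq_left hp2h, Int.natCast_dvd] at hgcd
    have hp2 : p * p ∣ Int.gcd r h := by
      rw [← sq]
      exact Nat.dvd_gcd hgcd (by simpa using hp2h)
    exact hp.ne_one (Nat.isUnit_iff.mp (hsf p hp2))
  · have hh : h ≠ 0 := by rintro rfl; exact hp2h (dvd_zero _)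
    exact hpD (mem_filter.mpr ⟨Nat.mem_primeFactors.mpr ⟨hp, hph, hh⟩, hodd,
      hp.coprime_iff_not_dvd.mp hpm, hp2h, by rwa [Nat.gcd_prime_sq_eq_self hp hph hp2h] at hgcd⟩)

theorem abs_summand_le (hpos : 0 < h) (d : ℕ) :
    |summand h r m d| ≤ h / (d : ℝ) ^ (3 / 2 : ℝ) := by
  by_cases hd : Admissible h r m d
  · have hμ : |(μ d : ℝ)| ≤ 1 := by exact_mod_cast abs_moebius_le_one
    have hφ : (φ (Nat.gcd (d ^ 2) h) : ℝ) ≤ h := by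
      exact_mod_cast (Nat.totient_le _).trans (Nat.gcd_le_right _ hpos)
    rw [summand, if_pos hd, abs_div, abs_mul, Nat.abs_cast, Nat.abs_cast]
    refine div_le_div₀ (by positivity) ?_ (by have := hd.1.pos; positivity)
      (Nat.rpow_three_halves_le_totient_sq hd.1)
    calc |(μ d : ℝ)| * φ (Nat.gcd (d ^ 2) h) ≤ 1 * h := by gcongr
      _ = h := one_mul _
  · rw [summand, if_neg hd, abs_zero]
    positivity

theorem summable_abs_summand (hpos : 0 < h) : Summable fun d => |summand h r m d| :=
  have hmajorant := (Real.summable_one_div_nat_rpow (p := 3 / 2).mpr (by norm_num)).mul_left (h : ℝ)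
  hmajorant.of_nonneg_of_le (fun _ => abs_nonneg _) fun d =>
    (abs_summand_le hpos d).trans_eq (mul_one_div _ _).symm

theorem eulerFactor_eq (hsf : Squarefree (Int.gcd r (h : ℤ))) (p : ℕ) :
    eulerFactor h m p =
      Set.mulIndicator {q | q.Prime} (fun q => ∑' e, summand h r m (q ^ e)) p *
        Set.mulIndicator (exceptionalPrimes h r m : Set ℕ)
          (fun q : ℕ => (1 - 1 / (q : ℝ))⁻¹) p := by
  by_cases hp : p.Prime
  swap
  · have hpD : p ∉ exceptionalPrimes h r m := fun hpD => hp (prime_of_mem_exceptionalPrimes hpD)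
    simp [eulerFactor, hp, hpD]
  rw [Set.mulIndicator_of_mem (show p ∈ {q | q.Prime} from hp), tsum_summand_prime_pow hp]
  by_cases hpD : p ∈ exceptionalPrimes h r m
  · have hph : p ∣ h := Nat.dvd_of_mem_primeFactors (mem_filter.mp hpD).1
    rw [eulerFactor, if_neg fun hc => hc.2.2 (dvd_mul_of_dvd_right hph m),
      Set.mulIndicator_of_mem (by exact_mod_cast hpD), summand_prime_of_mem hpD, ← sub_eq_add_neg,
      mul_inv_cancel₀ (hp.one_sub_one_div_ne_zero)]
  rw [Set.mulIndicator_of_notMem (by exact_mod_cast hpD), mul_one, eulerFactor]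
  by_cases hpE : Odd p ∧ ¬ p ∣ m * h
  · rw [if_pos ⟨hp, hpE⟩, summand_prime_of_not_dvd hp hpE.1 hpE.2, sub_eq_add_neg]
  · rw [if_neg fun hc => hpE hc.2, summand_prime_eq_zero hsf hp hpD hpE, add_zero]

theorem hasProd_eulerFactor (hpos : 0 < h) (hsf : Squarefree (Int.gcd r (h : ℤ))) :
    HasProd (eulerFactor h m)
      ((∑' d, summand h r m d) * ∏ p ∈ exceptionalPrimes h r m, (1 - 1 / (p : ℝ))⁻¹) := by
  have hEuler := EulerProduct.eulerProduct_hasProd_mulIndicator (f := summand h r m)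
    summand_one summand_mul
    (by simpa only [Real.norm_eq_abs] using summable_abs_summand hpos) summand_zero
  have hfinite := hasProd_subtype_iff_mulIndicator.mp
    ((exceptionalPrimes h r m).hasProd fun p => (1 - 1 / (p : ℝ))⁻¹)
  rw [show eulerFactor h m = _ from funext (eulerFactor_eq hsf)]
  exact hEuler.mul hfinite

end SquareGcdSum

open SquareGcdSum in
theorem stmt10_general (h : ℕ) (hpos : 0 < h) (r : ℤ)
    (hsf : Squarefree (Int.gcd r (h : ℤ))) (m : ℕ) :
    Summable (fun d : ℕ =>
      |if Odd d ∧ Nat.gcd d m = 1 ∧ ((Nat.gcd (d ^ 2) h : ℤ) ∣ r) then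
          (ArithmeticFunction.moebius d : ℝ) * (Nat.totient (Nat.gcd (d ^ 2) h) : ℝ) /
            (Nat.totient (d ^ 2) : ℝ)
        else 0|) ∧
    Multipliable (fun p : ℕ =>
      if p.Prime ∧ Odd p ∧ ¬ p ∣ m * h then 1 - 1 / ((p : ℝ) * ((p : ℝ) - 1)) else 1) ∧
    (∑' d : ℕ,
        if Odd d ∧ Nat.gcd d m = 1 ∧ ((Nat.gcd (d ^ 2) h : ℤ) ∣ r) then
          (ArithmeticFunction.moebius d : ℝ) * (Nat.totient (Nat.gcd (d ^ 2) h) : ℝ) /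
            (Nat.totient (d ^ 2) : ℝ)
        else 0) =
      (∏ p ∈ h.primeFactors.filter
          (fun p => Odd p ∧ ¬ p ∣ m ∧ ¬ p ^ 2 ∣ h ∧ (p : ℤ) ∣ r),
          (1 - 1 / (p : ℝ))) *
        ∏' p : ℕ,
          (if p.Prime ∧ Odd p ∧ ¬ p ∣ m * h then 1 - 1 / ((p : ℝ) * ((p : ℝ) - 1))
            else 1) := by
  have hprod := hasProd_eulerFactor (m := m) hpos hsf
  have hne : ∏ p ∈ exceptionalPrimes h r m, (1 - 1 / (p : ℝ)) ≠ 0 := prod_ne_zero_iff.mpr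
    fun p hp => (prime_of_mem_exceptionalPrimes hp).one_sub_one_div_ne_zero
  refine ⟨summable_abs_summand hpos, hprod.multipliable, ?_⟩
  change ∑' d, summand h r m d =
    (∏ p ∈ exceptionalPrimes h r m, (1 - 1 / (p : ℝ))) * ∏' p, eulerFactor h m p
  rw [hprod.tprod_eq, prod_inv_distrib, mul_left_comm, mul_inv_cancel₀ hne, mul_one]

/-- for `h` positive odd, `gcd(r,h)` squarefree and `m` a positive integer,
`Σ_{d odd, (d,m)=1, (d²,h)|r} μ(d)·φ((d²,h))/φ(d²)
  = ∏_{p odd, p∤m, p∥h, p|r} (1 - 1/p) · ∏_{p odd prime, p∤mh} (1 - 1/(p(p-1)))`,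
the series converging absolutely and the infinite product converging. -/
theorem stmt10 (h : ℕ) (hpos : 0 < h) (hodd : Odd h) (r : ℤ)
    (hsf : Squarefree (Int.gcd r (h : ℤ))) (m : ℕ) (hm : 0 < m) :
    Summable (fun d : ℕ =>
      |if Odd d ∧ Nat.gcd d m = 1 ∧ ((Nat.gcd (d ^ 2) h : ℤ) ∣ r) then
          (ArithmeticFunction.moebius d : ℝ) * (Nat.totient (Nat.gcd (d ^ 2) h) : ℝ) /
            (Nat.totient (d ^ 2) : ℝ)
        else 0|) ∧
    Multipliable (fun p : ℕ =>
      if p.Prime ∧ Odd p ∧ ¬ p ∣ m * h then 1 - 1 / ((p : ℝ) * ((p : ℝ) - 1)) else 1) ∧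
    (∑' d : ℕ,
        if Odd d ∧ Nat.gcd d m = 1 ∧ ((Nat.gcd (d ^ 2) h : ℤ) ∣ r) then
          (ArithmeticFunction.moebius d : ℝ) * (Nat.totient (Nat.gcd (d ^ 2) h) : ℝ) /
            (Nat.totient (d ^ 2) : ℝ)
        else 0) =
      (∏ p ∈ h.primeFactors.filter
          (fun p => Odd p ∧ ¬ p ∣ m ∧ ¬ p ^ 2 ∣ h ∧ (p : ℤ) ∣ r),
          (1 - 1 / (p : ℝ))) *
        ∏' p : ℕ,
          (if p.Prime ∧ Odd p ∧ ¬ p ∣ m * h then 1 - 1 / ((p : ℝ) * ((p : ℝ) - 1))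
            else 1) :=
  stmt10_general h hpos r hsf m
end

section
/- Let h be a positive odd integer, r an integer, and d a positive integer with gcd(d,h) = 1. Then for every real X ≥ 1, #{ t ∈ ℤ : 1 ≤ t ≤ X, t odd, gcd(d²t² − r, h) = 1 } = (X/2) · ∏_{p | h} ( 1 − (1 + (r|p))/p ) + O( τ(h) · 2^{ω(h)} ), where the product is over the primes p dividing h, (r|p) is the Legendre symbol (equal to 0 when p | r), τ(h) is the number of divisors of h, ω(h) is the number of distinct prime divisors of h, and the implied constant is absolute. -/
/-!
Möbius inversion over the divisors `e ∣ h` writes the count as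
`∑_{e ∣ h} μ(e) · #{t ≤ X odd : e ∣ d²t² - r}`. For odd `e` the inner condition is periodic
modulo `2e` and, by the Chinese remainder theorem, holds for exactly `ρ(e)` residues modulo `2e`,
where `ρ(e)` is the number of roots of `d²x² - r` modulo `e`; so the inner count is
`X ρ(e) / (2e) + O(ρ(e))`. As `ρ` is multiplicative, the main terms add up to
`(X/2) ∏_{p ∣ h} (1 - ρ(p)/p)`, and `ρ(p) = 1 + (r|p) ≤ 2` for `p ∤ 2d`, so the error terms of the
squarefree `e ∣ h` are at most `2^ω(h)` each.
-/

open Finset Function ArithmeticFunction Polynomial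
open scoped ArithmeticFunction.Moebius

namespace Nat

variable {p q : ℕ → Prop} [DecidablePred p] [DecidablePred q] {a b : ℕ}

theorem filter_Ico_card_mul_eq_of_periodic (pp : Periodic p a) (n k : ℕ) :
    #{t ∈ Ico n (n + a * k) | p t} = k * a.count p := by
  induction k with
  | zero => simp
  | succ k ih =>
    rw [mul_add_one, ← add_assoc, ← Ico_union_Ico_eq_Ico (by omega) le_self_add, filter_union,
      card_union_of_disjoint (disjoint_filter_filter (Ico_disjoint_Ico_consecutive _ _ _)), ih,
      filter_Ico_card_eq_of_periodic _ _ _ pp, add_one_mul]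

theorem filter_Ico_card_le_of_periodic (pp : Periodic p a) (n : ℕ) {s : ℕ} (hs : s ≤ a) :
    #{t ∈ Ico n (n + s) | p t} ≤ a.count p := by
  rw [← filter_Ico_card_eq_of_periodic n a p pp]
  exact card_le_card (filter_subset_filter _ (Ico_subset_Ico_right (by omega)))

theorem abs_filter_Icc_card_sub_le_of_periodic (pp : Periodic p a) (ha : 0 < a) {X : ℝ}
    (hX : 0 ≤ X) : |(#{t ∈ Icc 1 ⌊X⌋₊ | p t} : ℝ) - X * a.count p / a| ≤ a.count p := by
  set N := ⌊X⌋₊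
  set c := a.count p
  set k := N / a
  set s := N % a
  obtain ⟨r, hr, hcount⟩ : ∃ r ≤ c, #{t ∈ Icc 1 N | p t} = k * c + r := by
    have hsplit : Icc 1 N = Ico 1 (1 + a * k) ∪ Ico (1 + a * k) (1 + a * k + s) := by
      rw [Ico_union_Ico_eq_Ico le_self_add le_self_add]
      have : a * k + s = N := N.div_add_mod a
      ext t
      simp only [mem_Icc, mem_Ico]
      omega
    refine ⟨_, filter_Ico_card_le_of_periodic pp (1 + a * k) (N.mod_lt ha).le, ?_⟩
    rw [hsplit, filter_union, card_union_of_disjoint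
      (disjoint_filter_filter (Ico_disjoint_Ico_consecutive _ _ _)),
      filter_Ico_card_mul_eq_of_periodic pp]
  -- `X = a k + s + θ` with `0 ≤ θ < 1`, so `X c / a = k c + ℓ c` with `0 ≤ ℓ ≤ 1`.
  have hN : (a : ℝ) * k + s = N := by exact_mod_cast N.div_add_mod a
  have ha' : (0 : ℝ) < a := by exact_mod_cast ha
  have hs : (s : ℝ) + 1 ≤ a := by exact_mod_cast N.mod_lt ha
  have hθ₀ : 0 ≤ X - N := sub_nonneg.2 (Nat.floor_le hX)
  have hθ₁ : X - N < 1 := by linarith [Nat.lt_floor_add_one X]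
  have hsplit : X * c / a = k * c + (s + (X - N)) / a * c := by
    rw [← hN]
    field_simp
    ring
  have hℓ₀ : 0 ≤ (s + (X - N)) / a := by positivity
  have hℓ₁ : (s + (X - N)) / a ≤ 1 := by rw [div_le_one ha']; linarith
  have hr' : (r : ℝ) ≤ c := by exact_mod_cast hr
  rw [hcount, hsplit, abs_le]
  push_cast
  constructor <;> nlinarith [(Nat.cast_nonneg c : (0 : ℝ) ≤ c), (Nat.cast_nonneg r : (0 : ℝ) ≤ r)]

theorem count_eq_card_zmod_val (n : ℕ) [NeZero n] :
    n.count p = Nat.card {x : ZMod n // p x.val} := by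
  rw [count_eq_card_fintype, Fintype.card_eq_nat_card]
  exact Nat.card_congr
    { toFun := fun k => ⟨k, by rw [ZMod.val_cast_of_lt k.2.1]; exact k.2.2⟩
      invFun := fun x => ⟨x.1.val, x.1.val_lt, x.2⟩
      left_inv := fun k => Subtype.ext (ZMod.val_cast_of_lt k.2.1)
      right_inv := fun x => Subtype.ext (ZMod.natCast_zmod_val x.1) }

theorem count_and_eq_mul_of_periodic (hab : a.Coprime b) (hp : Periodic p a)
    (hq : Periodic q b) : (a * b).count (fun t => p t ∧ q t) = a.count p * b.count q := by
  rcases Nat.eq_zero_or_pos a with rfl | ha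
  · simp
  rcases Nat.eq_zero_or_pos b with rfl | hb
  · simp
  have : NeZero a := ⟨ha.ne'⟩
  have : NeZero b := ⟨hb.ne'⟩
  let e := ZMod.chineseRemainder hab
  have he : ∀ x : ZMod (a * b), (p x.val ∧ q x.val) ↔ (p (e x).1.val ∧ q (e x).2.val) := by
    intro x
    have hx : e x = ((x.val : ZMod a), (x.val : ZMod b)) := by
      conv_lhs => rw [← ZMod.natCast_zmod_val x]
      rw [map_natCast]
      rfl
    rw [hx, ZMod.val_natCast, ZMod.val_natCast, hp.map_mod_nat, hq.map_mod_nat]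
  rw [count_eq_card_zmod_val, count_eq_card_zmod_val, count_eq_card_zmod_val, ← Nat.card_prod,
    Nat.card_congr ((e.toEquiv.subtypeEquiv he).trans (Equiv.subtypeProdEquivProd
      (p := fun x : ZMod a => p x.val) (q := fun y : ZMod b => q y.val)))]

end Nat

namespace ArithmeticFunction

theorem IsMultiplicative.sum_divisors_moebius_mul {R : Type*} [CommRing R]
    {f : ArithmeticFunction R} (hf : f.IsMultiplicative) {n : ℕ} (hn : n ≠ 0) :
    ∑ d ∈ n.divisors, (μ d : R) * f d = ∏ p ∈ n.primeFactors, (1 - f p) := by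
  set rad := ∏ p ∈ n.primeFactors, p
  have hrad : Squarefree rad := Finset.squarefree_prod_of_pairwise_isCoprime
    (fun p hp q hq hpq => Nat.coprime_iff_isRelPrime.1 <|
      (Nat.coprime_primes (Nat.prime_of_mem_primeFactors hp)
        (Nat.prime_of_mem_primeFactors hq)).2 hpq)
    fun p hp => (Nat.prime_of_mem_primeFactors hp).squarefree
  have hdiv : rad.divisors = {d ∈ n.divisors | Squarefree d} := by
    ext d
    simp only [Nat.mem_divisors, mem_filter, hrad.ne_zero, hn, ne_eq, not_false_eq_true,
      and_true]
    refine ⟨fun hd => ⟨hd.trans n.prod_primeFactors_dvd, hrad.squarefree_of_dvd hd⟩,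
      fun ⟨hd, hsq⟩ => ?_⟩
    rw [← Nat.prod_primeFactors_of_squarefree hsq, Nat.prod_primeFactors_dvd_iff hrad.ne_zero,
      Nat.primeFactors_prod_primeFactors]
    exact Nat.primeFactors_mono hd hn
  have hprod := IsMultiplicative.prodPrimeFactors_one_sub_of_squarefree f hf hrad
  rw [Nat.primeFactors_prod_primeFactors n] at hprod
  rw [hprod, hdiv, sum_filter_of_ne]
  intro d _ hd
  by_contra hsq
  simp [moebius_eq_zero_of_not_squarefree hsq] at hd

theorem IsMultiplicative.sum_abs_moebius_mul_le {f : ArithmeticFunction ℕ}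
    (hf : f.IsMultiplicative) {n c : ℕ} (hc : 1 ≤ c) (hfc : ∀ p ∈ n.primeFactors, f p ≤ c) :
    ∑ d ∈ n.divisors, |(μ d : ℝ)| * f d ≤ n.divisors.card * c ^ n.primeFactors.card := by
  rw [← nsmul_eq_mul, ← sum_const]
  refine sum_le_sum fun d hd => ?_
  have hdn := Nat.dvd_of_mem_divisors hd
  have hn := (Nat.mem_divisors.1 hd).2
  by_cases hsq : Squarefree d
  · have hle : f d ≤ c ^ n.primeFactors.card := calc
      f d = ∏ p ∈ d.primeFactors, f p := (hf.prod_primeFactors hsq).symm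
      _ ≤ c ^ d.primeFactors.card := prod_le_pow_card _ _ _ fun p hp =>
        hfc p (Nat.primeFactors_mono hdn hn hp)
      _ ≤ c ^ n.primeFactors.card := Nat.pow_le_pow_right hc
        (card_le_card (Nat.primeFactors_mono hdn hn))
    rw [← Int.cast_abs, abs_moebius_eq_one_of_squarefree hsq, Int.cast_one, one_mul]
    exact_mod_cast hle
  · simp [moebius_eq_zero_of_not_squarefree hsq]

theorem sum_moebius_divisors_dvd (z : ℤ) {n : ℕ} (hn : n ≠ 0) :
    ∑ d ∈ n.divisors with ((d : ℕ) : ℤ) ∣ z, μ d = if Int.gcd z n = 1 then 1 else 0 := by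
  have hdiv : {d ∈ n.divisors | ((d : ℕ) : ℤ) ∣ z} = (Int.gcd z n).divisors := by
    ext d
    simp [Int.ofNat_dvd_left, Int.gcd, Nat.dvd_gcd_iff, hn]
    tauto
  rw [hdiv, ← coe_mul_zeta_apply, moebius_mul_coe_zeta, one_apply]

theorem card_filter_gcd_eq_one_eq_sum_moebius {α : Type*} (s : Finset α) (g : α → ℤ) {n : ℕ}
    (hn : n ≠ 0) :
    (#{t ∈ s | Int.gcd (g t) n = 1} : ℤ) =
      ∑ d ∈ n.divisors, μ d * (#{t ∈ s | (d : ℤ) ∣ g t} : ℤ) := by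
  simp_rw [card_filter, Nat.cast_sum, Nat.cast_ite, Nat.cast_one, Nat.cast_zero,
    ← sum_moebius_divisors_dvd _ hn, sum_filter, mul_sum, mul_ite, mul_one, mul_zero]
  exact sum_comm

end ArithmeticFunction

namespace Polynomial

variable (f : ℤ[X])

theorem periodic_natCast_dvd_eval (m : ℕ) :
    Periodic (fun t : ℕ => (m : ℤ) ∣ f.eval (t : ℤ)) m := by
  intro t
  have := sub_dvd_eval_sub ((t + m : ℕ) : ℤ) t f
  push_cast at this ⊢
  rw [add_sub_cancel_left] at this
  exact propext (dvd_iff_dvd_of_dvd_sub this)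

def rootCountMod : ArithmeticFunction ℕ :=
  ⟨fun m => m.count fun t => (m : ℤ) ∣ f.eval (t : ℤ), Nat.count_zero _⟩

theorem rootCountMod_apply (m : ℕ) :
    f.rootCountMod m = m.count fun t => (m : ℤ) ∣ f.eval (t : ℤ) := rfl

theorem isMultiplicative_rootCountMod : f.rootCountMod.IsMultiplicative := by
  refine IsMultiplicative.iff_ne_zero.2 ⟨by simp [rootCountMod_apply], fun {m n} _ _ hmn => ?_⟩
  have hdvd : ∀ z : ℤ, ((m * n : ℕ) : ℤ) ∣ z ↔ (m : ℤ) ∣ z ∧ (n : ℤ) ∣ z := fun z => by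
    simp only [Int.ofNat_dvd_left]
    exact ⟨fun h => ⟨(dvd_mul_right m n).trans h, (dvd_mul_left n m).trans h⟩,
      fun h => hmn.mul_dvd_of_dvd_of_dvd h.1 h.2⟩
  simp only [rootCountMod_apply, hdvd]
  exact Nat.count_and_eq_mul_of_periodic hmn (periodic_natCast_dvd_eval f m)
    (periodic_natCast_dvd_eval f n)

theorem abs_card_odd_dvd_eval_sub_le {e : ℕ} (he : Odd e) {X : ℝ} (hX : 0 ≤ X) :
    |(((Icc 1 ⌊X⌋₊).filter fun t : ℕ => Odd t ∧ (e : ℤ) ∣ f.eval (t : ℤ)).card : ℝ) -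
        X * f.rootCountMod e / (2 * e)| ≤ f.rootCountMod e := by
  have hodd : Periodic (fun t : ℕ => Odd t) 2 := fun t => by simp [Nat.odd_add]
  have hdvd := periodic_natCast_dvd_eval f e
  have hperiod : Periodic (fun t : ℕ => Odd t ∧ (e : ℤ) ∣ f.eval (t : ℤ)) (2 * e) :=
    fun t => congrArg₂ And ((mul_comm e 2 ▸ hodd.nat_mul e) t) ((hdvd.nat_mul 2) t)
  have hcount :
      (2 * e).count (fun t => Odd t ∧ (e : ℤ) ∣ f.eval (t : ℤ)) = f.rootCountMod e := by
    rw [Nat.count_and_eq_mul_of_periodic (Nat.coprime_two_left.2 he) hodd hdvd,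
      show Nat.count (fun t => Odd t) 2 = 1 by decide, one_mul, rootCountMod_apply]
  have := Nat.abs_filter_Icc_card_sub_le_of_periodic hperiod (by linarith [he.pos]) hX
  rwa [hcount, Nat.cast_mul, Nat.cast_two] at this

theorem abs_card_odd_coprime_eval_sub_le {h : ℕ} (hh : Odd h) {X : ℝ} (hX : 0 ≤ X) :
    |(((Icc 1 ⌊X⌋₊).filter fun t : ℕ => Odd t ∧ Int.gcd (f.eval (t : ℤ)) h = 1).card : ℝ) -
        X / 2 * ∏ p ∈ h.primeFactors, (1 - (f.rootCountMod p : ℝ) / p)| ≤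
      ∑ e ∈ h.divisors, |(μ e : ℝ)| * f.rootCountMod e := by
  have hsieve :
      (((Icc 1 ⌊X⌋₊).filter fun t : ℕ => Odd t ∧ Int.gcd (f.eval (t : ℤ)) h = 1).card : ℝ) =
        ∑ e ∈ h.divisors, (μ e : ℝ) *
          ((Icc 1 ⌊X⌋₊).filter fun t : ℕ => Odd t ∧ (e : ℤ) ∣ f.eval (t : ℤ)).card := by
    have := card_filter_gcd_eq_one_eq_sum_moebius ((Icc 1 ⌊X⌋₊).filter fun t : ℕ => Odd t)
      (fun t : ℕ => f.eval (t : ℤ)) hh.pos.ne'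
    simp only [filter_filter] at this
    exact_mod_cast this
  have hmain : X / 2 * ∏ p ∈ h.primeFactors, (1 - (f.rootCountMod p : ℝ) / p) =
      ∑ e ∈ h.divisors, (μ e : ℝ) * (X * f.rootCountMod e / (2 * e)) := by
    have hmul := ((isMultiplicative_rootCountMod f).natCast (R := ℝ)).pdiv
      (isMultiplicative_id.natCast (R := ℝ))
    have := hmul.sum_divisors_moebius_mul hh.pos.ne'
    simp only [pdiv_apply, natCoe_apply, id_apply] at this
    rw [← this, mul_sum]
    refine sum_congr rfl fun e _ => ?_
    ring
  rw [hsieve, hmain, ← sum_sub_distrib]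
  refine (abs_sum_le_sum_abs _ _).trans (sum_le_sum fun e he => ?_)
  rw [← mul_sub, abs_mul]
  exact mul_le_mul_of_nonneg_left
    (f.abs_card_odd_dvd_eval_sub_le (hh.of_dvd_nat (Nat.dvd_of_mem_divisors he)) hX)
    (abs_nonneg _)

theorem rootCountMod_C_sq_mul_X_sq_sub_C {p : ℕ} [Fact p.Prime] (hp : p ≠ 2) {d : ℤ}
    (hd : ¬(p : ℤ) ∣ d) (r : ℤ) :
    ((C (d ^ 2) * X ^ 2 - C r).rootCountMod p : ℤ) = 1 + jacobiSym r p := by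
  have hd' : (d : ZMod p) ≠ 0 := by rwa [Ne, ZMod.intCast_zmod_eq_zero_iff_dvd]
  have hroots : ∀ x : ZMod p, (p : ℤ) ∣ (C (d ^ 2) * X ^ 2 - C r).eval (x.val : ℤ) ↔
      (Equiv.mulLeft₀ _ hd' x) ^ 2 = r := fun x => by
    rw [← ZMod.intCast_zmod_eq_zero_iff_dvd]
    simp [mul_pow, sub_eq_zero]
  rw [rootCountMod_apply, Nat.count_eq_card_zmod_val, Nat.card_congr
      ((Equiv.mulLeft₀ _ hd').subtypeEquiv (q := fun y => y ^ 2 = (r : ZMod p)) hroots),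
    ← jacobiSym.legendreSym.to_jacobiSym, add_comm, ← legendreSym.card_sqrts (p := p) hp r,
    Set.toFinset_card, Nat.card_eq_fintype_card]
  rfl

theorem rootCountMod_C_sq_mul_X_sq_sub_C_of_mem_primeFactors {h d : ℕ} (hh : Odd h)
    (hdh : d.gcd h = 1) (r : ℤ) {p : ℕ} (hp : p ∈ h.primeFactors) :
    ((C ((d : ℤ) ^ 2) * X ^ 2 - C r).rootCountMod p : ℤ) = 1 + jacobiSym r p := by
  have hpp := Nat.prime_of_mem_primeFactors hp
  have : Fact p.Prime := ⟨hpp⟩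
  have hp2 : p ≠ 2 := by
    rintro rfl
    exact Nat.not_even_iff_odd.2 (hh.of_dvd_nat (Nat.dvd_of_mem_primeFactors hp)) even_two
  refine rootCountMod_C_sq_mul_X_sq_sub_C hp2 (fun hpd => hpp.one_lt.ne' ?_) r
  rw [← Nat.dvd_one, ← hdh]
  exact Nat.dvd_gcd (Int.natCast_dvd_natCast.1 hpd) (Nat.dvd_of_mem_primeFactors hp)

end Polynomial

/-- for `h` positive odd, `r` an integer and `d` positive with `gcd(d,h)=1`,
the number of odd `1 ≤ t ≤ X` with `gcd(d²t² - r, h) = 1` is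
`(X/2)·∏_{p | h}(1 - (1+(r|p))/p) + O(τ(h)·2^{ω(h)})`, with an absolute implied
constant. -/
theorem stmt12 :
    ∃ C : ℝ, ∀ (h : ℕ), 0 < h → Odd h → ∀ (r : ℤ) (d : ℕ), 0 < d → Nat.gcd d h = 1 →
      ∀ X : ℝ, 1 ≤ X →
        |(((Finset.Icc 1 ⌊X⌋₊).filter
              (fun t : ℕ => Odd t ∧
                Int.gcd ((d : ℤ) ^ 2 * (t : ℤ) ^ 2 - r) (h : ℤ) = 1)).card : ℝ) -
            X / 2 * ∏ p ∈ h.primeFactors, (1 - (1 + (jacobiSym r p : ℝ)) / (p : ℝ))| ≤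
          C * (h.divisors.card : ℝ) * 2 ^ h.primeFactors.card := by
  refine ⟨1, fun h _ hh r d _ hdh X hX => ?_⟩
  set f : ℤ[X] := C ((d : ℤ) ^ 2) * Polynomial.X ^ 2 - C r
  have hρ : ∀ p ∈ h.primeFactors, (f.rootCountMod p : ℤ) = 1 + jacobiSym r p := fun _ hp =>
    rootCountMod_C_sq_mul_X_sq_sub_C_of_mem_primeFactors hh hdh r hp
  have hcount := f.abs_card_odd_coprime_eval_sub_le hh (X := X) (by linarith)
  have hprod : ∏ p ∈ h.primeFactors, (1 - (f.rootCountMod p : ℝ) / p) =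
      ∏ p ∈ h.primeFactors, (1 - (1 + (jacobiSym r p : ℝ)) / p) :=
    prod_congr rfl fun p hp => by
      congr 2
      exact_mod_cast hρ p hp
  have herror := (isMultiplicative_rootCountMod f).sum_abs_moebius_mul_le one_le_two
    fun p hp => by
      have := hρ p hp
      rcases jacobiSym.trichotomy r p with hj | hj | hj <;> omega
  simp only [f, eval_sub, eval_mul, eval_C, eval_pow, eval_X, hprod] at hcount
  push_cast at herror
  linarith
end

section
/- Let h be a positive odd integer and r an integer such that gcd(r,h) is squarefree. Then (1/3) · P(r,h) · ∏_{p | h, p odd} ( 1 − (1 + (r|p))/p ) · ∏_{p odd prime, p ∤ h} ( 1 + G(p)/p ) = 𝔠(r,h), where all infinite products converge. -/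
noncomputable section

/-- The local factor at `ℓ` of the constant `𝔠(r,h)`; it is `1` unless `ℓ` is an odd prime. -/
noncomputable def locC (r : ℤ) (h : ℕ) (ℓ : ℕ) : ℝ :=
  if ℓ.Prime ∧ ℓ ≠ 2 then
    if ℓ ∣ h then
      if (ℓ : ℤ) ∣ r then
        (if ¬ (ℓ ^ 2 ∣ h) then ((ℓ : ℝ) - 1) / (ℓ : ℝ) else 1)
      else ((ℓ : ℝ) * ((ℓ : ℝ) - 1 - (jacobiSym r ℓ : ℝ))) /
        (((ℓ : ℝ) - 1) * ((ℓ : ℝ) - (jacobiSym r ℓ : ℝ)))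
    else ((ℓ : ℝ) ^ 4 - 2 * (ℓ : ℝ) ^ 2 - (ℓ : ℝ) + 1) / ((ℓ : ℝ) ^ 2 * ((ℓ : ℝ) ^ 2 - 1))
  else 1

/-- The constant `𝔠(r,h)` of David--Jiménez Urroz. -/
noncomputable def frakC (r : ℤ) (h : ℕ) : ℝ := (1 / (3 * (h : ℝ))) * ∏' ℓ : ℕ, locC r h ℓ

/-- The local factor at `p` of the constant `P(r,h)`; it is `1` unless `p` is an odd prime. -/
noncomputable def Pfac (r : ℤ) (h : ℕ) (p : ℕ) : ℝ :=
  if p.Prime ∧ p ≠ 2 then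
    if p ∣ h then
      ((p : ℝ) / ((p : ℝ) - (jacobiSym r p : ℝ))) *
        (if ¬ (p ^ 2 ∣ h) ∧ (p : ℤ) ∣ r then 1 - 1 / (p : ℝ) else 1)
    else ((p : ℝ) ^ 4 - (p : ℝ) ^ 3 - 2 * (p : ℝ) ^ 2 - (p : ℝ) + 1) /
      ((p : ℝ) * ((p : ℝ) - 1) * ((p : ℝ) ^ 2 - 1))
  else 1

/-- The constant `P(r,h)`. -/
noncomputable def Pconst (r : ℤ) (h : ℕ) : ℝ :=
  (1 / (Nat.totient h : ℝ)) * ∏' p : ℕ, Pfac r h p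

/-- `G(p) = (2p²+p-1)/(p⁴-p³-2p²-p+1)`. -/
noncomputable def Gp (p : ℕ) : ℝ :=
  (2 * (p : ℝ) ^ 2 + (p : ℝ) - 1) /
    ((p : ℝ) ^ 4 - (p : ℝ) ^ 3 - 2 * (p : ℝ) ^ 2 - (p : ℝ) + 1)

/-
The identity holds Euler factor by Euler factor. For an odd prime `p ∤ h` the factor of
`P(r,h)` times `1 + G(p)/p` is the factor of `𝔠(r,h)`; for `p ∣ h` the factor of `P(r,h)` times
`1 - (1 + (r|p))/p` is the factor of `𝔠(r,h)` times `1 - 1/p`. Since `h` is odd, the product of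
these `1 - 1/p` is `φ(h)/h`, which turns `1/(3φ(h))` into `1/(3h)`. Every local factor at
`p > h` is `1 + O(p⁻²)`, so all three products converge absolutely.
-/

open Filter

theorem tprod_mul_prod_eq_tprod_mul_prod {ι α : Type*} [CommMonoid α] [TopologicalSpace α]
    [ContinuousMul α] [T2Space α] {f g e d : ι → α} {s : Finset ι}
    (hf : Multipliable f) (hg : Multipliable g)
    (hs : ∀ i ∈ s, f i * e i = g i * d i) (hsc : ∀ i ∉ s, f i = g i) :
    (∏' i, f i) * ∏ i ∈ s, e i = (∏' i, g i) * ∏ i ∈ s, d i := by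
  have hfin (u : ι → α) : Multipliable ((s : Set ι).mulIndicator u) :=
    multipliable_of_ne_finset_one fun i hi => Set.mulIndicator_of_notMem hi u
  rw [prod_eq_tprod_mulIndicator, prod_eq_tprod_mulIndicator, ← hf.tprod_mul (hfin e),
    ← hg.tprod_mul (hfin d)]
  refine tprod_congr fun i => ?_
  by_cases hi : i ∈ s
  · simp only [Set.mulIndicator_of_mem (Finset.mem_coe.mpr hi), hs i hi]
  · simp only [Set.mulIndicator_of_notMem (Finset.mem_coe.not.mpr hi), hsc i hi]

theorem Real.multipliable_of_eventually_abs_sub_one_le {f : ℕ → ℝ} {C : ℝ}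
    (hf : ∀ᶠ n in atTop, |f n - 1| ≤ C / (n : ℝ) ^ 2) : Multipliable f := by
  have hs : Summable fun n => f n - 1 :=
    ((Real.summable_nat_pow_inv.mpr one_lt_two).mul_left C).of_norm_bounded_eventually
      (by simpa [Nat.cofinite_eq_atTop, div_eq_mul_inv] using hf)
  simpa using Real.multipliable_one_add_of_summable hs

theorem Nat.totient_div_self {n : ℕ} (hn : n ≠ 0) :
    (n.totient : ℝ) / n = ∏ p ∈ n.primeFactors, (1 - (p : ℝ)⁻¹) := by
  have := congrArg (Rat.cast : ℚ → ℝ) (Nat.totient_eq_mul_prod_factors n)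
  push_cast at this
  rw [this, mul_div_cancel_left₀ _ (by exact_mod_cast hn)]

lemma jacobiSym_le_one (a : ℤ) (b : ℕ) : (jacobiSym a b : ℝ) ≤ 1 := by
  rcases jacobiSym.trichotomy a b with h | h | h <;> rw [h] <;> norm_num

lemma jacobiSym_eq_zero_of_dvd {a : ℤ} {p : ℕ} (hp : p.Prime) (ha : (p : ℤ) ∣ a) :
    jacobiSym a p = 0 := by
  have := Fact.mk hp
  rw [← jacobiSym.legendreSym.to_jacobiSym, legendreSym.eq_zero_iff,
    ZMod.intCast_zmod_eq_zero_iff_dvd]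
  exact ha

def Gfac (h p : ℕ) : ℝ := if p.Prime ∧ p ≠ 2 ∧ ¬ p ∣ h then 1 + Gp p / p else 1

lemma three_le_of_prime_of_ne_two {p : ℕ} (hp : p.Prime) (h2 : p ≠ 2) : (3 : ℝ) ≤ p := by
  have := hp.two_le
  exact_mod_cast (show 3 ≤ p by omega)

lemma abs_div_sub_one_le_of_abs_sub_le {a b c : ℝ} (hb : 0 < b) (h : |a - b| ≤ c * b) :
    |a / b - 1| ≤ c := by
  rwa [div_sub_one hb.ne', abs_div, abs_of_pos hb, div_le_iff₀ hb]

lemma abs_Pfac_sub_one_le (r : ℤ) {h p : ℕ} (hp : ¬ p ∣ h) :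
    |Pfac r h p - 1| ≤ 3 / (p : ℝ) ^ 2 := by
  unfold Pfac
  split_ifs with hpr
  · have hq := three_le_of_prime_of_ne_two hpr.1 hpr.2
    set q : ℝ := (p : ℝ)
    have hb : 0 < q * (q - 1) * (q ^ 2 - 1) := by
      have : 0 < q ^ 2 - 1 := by nlinarith
      have : 0 < q - 1 := by linarith
      positivity
    refine abs_div_sub_one_le_of_abs_sub_le hb ?_
    rw [abs_of_nonpos (by nlinarith), div_mul_eq_mul_div, le_div_iff₀ (by positivity)]
    nlinarith [mul_nonneg (mul_nonneg (sub_nonneg.2 hq) (sub_nonneg.2 hq)) (sub_nonneg.2 hq)]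
  · simp only [sub_self, abs_zero]; positivity

lemma abs_locC_sub_one_le (r : ℤ) {h p : ℕ} (hp : ¬ p ∣ h) :
    |locC r h p - 1| ≤ 3 / (p : ℝ) ^ 2 := by
  unfold locC
  split_ifs with hpr
  · have hq := three_le_of_prime_of_ne_two hpr.1 hpr.2
    set q : ℝ := (p : ℝ)
    have hb : 0 < q ^ 2 * (q ^ 2 - 1) := by
      have : 0 < q ^ 2 - 1 := by nlinarith
      positivity
    refine abs_div_sub_one_le_of_abs_sub_le hb ?_
    rw [abs_of_nonpos (by nlinarith), div_mul_eq_mul_div, le_div_iff₀ (by positivity)]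
    nlinarith
  · simp only [sub_self, abs_zero]; positivity

lemma Gp_denom_pos {q : ℝ} (hq : 3 ≤ q) : 0 < q ^ 4 - q ^ 3 - 2 * q ^ 2 - q + 1 := by
  nlinarith [mul_nonneg (mul_nonneg (sub_nonneg.2 hq) (sub_nonneg.2 hq)) (sub_nonneg.2 hq)]

lemma abs_Gfac_sub_one_le (h p : ℕ) : |Gfac h p - 1| ≤ 3 / (p : ℝ) ^ 2 := by
  unfold Gfac Gp
  split_ifs with hpr
  · have hq := three_le_of_prime_of_ne_two hpr.1 hpr.2.1
    set q : ℝ := (p : ℝ)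
    have hN := Gp_denom_pos hq
    rw [add_sub_cancel_left, div_div, abs_div, abs_of_nonneg (by nlinarith),
      abs_of_pos (by positivity), div_le_div_iff₀ (by positivity) (by positivity)]
    nlinarith [mul_nonneg (mul_nonneg (sub_nonneg.2 hq) (sub_nonneg.2 hq)) (sub_nonneg.2 hq)]
  · simp only [sub_self, abs_zero]; positivity

lemma Pfac_mul_Gfac_of_not_dvd (r : ℤ) {h p : ℕ} (hp : p.Prime → ¬ p ∣ h) :
    Pfac r h p * Gfac h p = locC r h p := by
  unfold Pfac Gfac locC Gp
  by_cases hpr : p.Prime ∧ p ≠ 2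
  · have hd := hp hpr.1
    rw [if_pos hpr, if_pos hpr, if_neg hd, if_neg hd, if_pos ⟨hpr.1, hpr.2, hd⟩]
    have hq := three_le_of_prime_of_ne_two hpr.1 hpr.2
    set q : ℝ := (p : ℝ)
    have hN := (Gp_denom_pos hq).ne'
    have : q - 1 ≠ 0 := by linarith
    have : q ^ 2 - 1 ≠ 0 := by nlinarith
    have : q ≠ 0 := by linarith
    rw [div_div, one_add_div (mul_ne_zero hN this), div_mul_div_comm,
      div_eq_div_iff (by positivity) (by positivity)]
    ring
  · rw [if_neg hpr, if_neg hpr, if_neg (by tauto), one_mul]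

lemma Gfac_of_dvd {h p : ℕ} (hp : p ∣ h) : Gfac h p = 1 :=
  if_neg fun H => H.2.2 hp

lemma Pfac_mul_eq_locC_mul_of_dvd (r : ℤ) {h p : ℕ} (hpr : p.Prime) (hp2 : p ≠ 2)
    (hp : p ∣ h) :
    Pfac r h p * (1 - (1 + (jacobiSym r p : ℝ)) / p) = locC r h p * (1 - (p : ℝ)⁻¹) := by
  simp only [Pfac, locC, if_pos (And.intro hpr hp2), if_pos hp]
  have hq := three_le_of_prime_of_ne_two hpr hp2
  have : (p : ℝ) ≠ 0 := by linarith
  by_cases hr : (p : ℤ) ∣ r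
  · simp only [jacobiSym_eq_zero_of_dvd hpr hr, Int.cast_zero, sub_zero, add_zero,
      div_self this, one_mul, hr, and_true, if_true]
    split_ifs <;> field_simp
  · simp only [hr, and_false, if_false, mul_one]
    have : (p : ℝ) - 1 ≠ 0 := by linarith
    have : (p : ℝ) - jacobiSym r p ≠ 0 := by linarith [jacobiSym_le_one r p]
    field_simp
    ring

lemma multipliable_Pfac (r : ℤ) {h : ℕ} (hh : 0 < h) : Multipliable (Pfac r h) :=
  Real.multipliable_of_eventually_abs_sub_one_le <| (eventually_gt_atTop h).mono
    fun _ hp => abs_Pfac_sub_one_le r (Nat.not_dvd_of_pos_of_lt hh hp)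

lemma multipliable_locC (r : ℤ) {h : ℕ} (hh : 0 < h) : Multipliable (locC r h) :=
  Real.multipliable_of_eventually_abs_sub_one_le <| (eventually_gt_atTop h).mono
    fun _ hp => abs_locC_sub_one_le r (Nat.not_dvd_of_pos_of_lt hh hp)

lemma multipliable_Gfac (h : ℕ) : Multipliable (Gfac h) :=
  Real.multipliable_of_eventually_abs_sub_one_le <| .of_forall (abs_Gfac_sub_one_le h)

theorem stmt14_general (h : ℕ) (hpos : 0 < h) (hodd : Odd h) (r : ℤ) :
    Multipliable (Pfac r h) ∧
    Multipliable (fun p : ℕ => if p.Prime ∧ p ≠ 2 ∧ ¬ p ∣ h then 1 + Gp p / p else 1) ∧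
    Multipliable (locC r h) ∧
    (1 / 3 : ℝ) * Pconst r h *
        (∏ p ∈ h.primeFactors.filter (fun p => Odd p),
          (1 - (1 + (jacobiSym r p : ℝ)) / (p : ℝ))) *
        (∏' p : ℕ, (if p.Prime ∧ p ≠ 2 ∧ ¬ p ∣ h then 1 + Gp p / p else 1)) =
      frakC r h := by
  have hP := multipliable_Pfac r hpos
  have hG := multipliable_Gfac h
  have hL := multipliable_locC r hpos
  refine ⟨hP, hG, hL, ?_⟩
  have hodd_factors : h.primeFactors.filter (fun p => Odd p) = h.primeFactors :=
    Finset.filter_true_of_mem fun p hp => hodd.of_dvd_nat (Nat.dvd_of_mem_primeFactors hp)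
  have key : ((∏' p, Pfac r h p) * ∏' p, Gfac h p) *
      ∏ p ∈ h.primeFactors, (1 - (1 + (jacobiSym r p : ℝ)) / p) =
      (∏' p, locC r h p) * ((h.totient : ℝ) / h) := by
    rw [← hP.tprod_mul hG, Nat.totient_div_self hpos.ne']
    refine tprod_mul_prod_eq_tprod_mul_prod (hP.mul hG) hL (fun p hp => ?_) fun p hp => ?_
    · obtain ⟨hpr, hdvd, -⟩ := Nat.mem_primeFactors.1 hp
      rw [Gfac_of_dvd hdvd, mul_one]
      exact Pfac_mul_eq_locC_mul_of_dvd r hpr (hodd.ne_two_of_dvd_nat hdvd) hdvd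
    · exact Pfac_mul_Gfac_of_not_dvd r fun hpr hd =>
        hp (Nat.mem_primeFactors.2 ⟨hpr, hd, hpos.ne'⟩)
  have hφ : (h.totient : ℝ) ≠ 0 := by exact_mod_cast (Nat.totient_pos.2 hpos).ne'
  have hh : (h : ℝ) ≠ 0 := by exact_mod_cast hpos.ne'
  rw [hodd_factors]
  unfold Pconst frakC
  unfold Gfac at key
  field_simp at key ⊢
  linear_combination key

/-- `(1/3)·P(r,h)·∏_{p|h odd}(1-(1+(r|p))/p)·∏_{p∤h odd prime}(1+G(p)/p)
= 𝔠(r,h)`, all infinite products converging. -/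
theorem stmt14 (h : ℕ) (hpos : 0 < h) (hodd : Odd h) (r : ℤ)
    (hsf : Squarefree (Int.gcd r (h : ℤ))) :
    Multipliable (Pfac r h) ∧
    Multipliable (fun p : ℕ => if p.Prime ∧ p ≠ 2 ∧ ¬ p ∣ h then 1 + Gp p / p else 1) ∧
    Multipliable (locC r h) ∧
    (1 / 3 : ℝ) * Pconst r h *
        (∏ p ∈ h.primeFactors.filter (fun p => Odd p),
          (1 - (1 + (jacobiSym r p : ℝ)) / (p : ℝ))) *
        (∏' p : ℕ, (if p.Prime ∧ p ≠ 2 ∧ ¬ p ∣ h then 1 + Gp p / p else 1)) =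
      frakC r h :=
  stmt14_general h hpos hodd r
end
end

section
/- Let h be a positive odd integer and r an integer such that gcd(r,h) is squarefree. Then the infinite product defining 𝔠(r,h) converges and 𝔠(r,h) > 0. -/
/-!
Every local factor of `𝔠(r,h)` is positive, and for the cofinitely many `ℓ ∤ h` it differs
from `1` by at most `2 / ℓ²`. Hence `∑ log (locC r h ℓ)` converges, and the product is the
exponential of this sum, so it is positive.
-/

noncomputable section

lemma abs_jacobiSym_cast_le_one (a : ℤ) (b : ℕ) : |(jacobiSym a b : ℝ)| ≤ 1 := by
  rcases jacobiSym.trichotomy a b with h | h | h <;> simp [h]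

lemma three_le_of_prime_of_ne_two_s15 {ℓ : ℕ} (hℓ : ℓ.Prime ∧ ℓ ≠ 2) : (3 : ℝ) ≤ ℓ := by
  have := hℓ.1.two_le
  exact_mod_cast (show 3 ≤ ℓ by omega)

lemma quartic_factor_pos {x : ℝ} (hx : 2 ≤ x) :
    0 < (x ^ 4 - 2 * x ^ 2 - x + 1) / (x ^ 2 * (x ^ 2 - 1)) := by
  have hx2 : 4 ≤ x ^ 2 := by nlinarith
  apply div_pos
  · nlinarith
  · exact mul_pos (by positivity) (by linarith)

lemma abs_quartic_factor_sub_one_le {x : ℝ} (hx : 2 ≤ x) :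
    |(x ^ 4 - 2 * x ^ 2 - x + 1) / (x ^ 2 * (x ^ 2 - 1)) - 1| ≤ 2 / x ^ 2 := by
  have hx2 : 4 ≤ x ^ 2 := by nlinarith
  have hden : 0 < x ^ 2 * (x ^ 2 - 1) := mul_pos (by positivity) (by linarith)
  have hdiff : (x ^ 4 - 2 * x ^ 2 - x + 1) / (x ^ 2 * (x ^ 2 - 1)) - 1
      = -((x ^ 2 + x - 1) / (x ^ 2 * (x ^ 2 - 1))) := by
    rw [div_sub_one hden.ne', ← neg_div]
    ring
  rw [hdiff, abs_neg, abs_of_nonneg (div_nonneg (by nlinarith) hden.le),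
    div_le_div_iff₀ hden (by positivity)]
  nlinarith

lemma legendre_factor_pos {x c : ℝ} (hx : 2 < x) (hc : |c| ≤ 1) :
    0 < x * (x - 1 - c) / ((x - 1) * (x - c)) := by
  obtain ⟨hc₁, hc₂⟩ := abs_le.mp hc
  apply div_pos <;> apply mul_pos <;> linarith

lemma locC_pos (r : ℤ) (h ℓ : ℕ) : 0 < locC r h ℓ := by
  unfold locC
  split_ifs with hℓ
  · exact one_pos
  · have := three_le_of_prime_of_ne_two_s15 hℓ
    apply div_pos <;> linarith
  · exact legendre_factor_pos (by linarith [three_le_of_prime_of_ne_two_s15 hℓ])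
      (abs_jacobiSym_cast_le_one r ℓ)
  · exact quartic_factor_pos (by linarith [three_le_of_prime_of_ne_two_s15 hℓ])
  · exact one_pos

lemma abs_locC_sub_one_le_of_not_dvd (r : ℤ) {h ℓ : ℕ} (hℓh : ¬ ℓ ∣ h) :
    |locC r h ℓ - 1| ≤ 2 / (ℓ : ℝ) ^ 2 := by
  unfold locC
  split_ifs with hℓ
  · exact abs_quartic_factor_sub_one_le (by linarith [three_le_of_prime_of_ne_two_s15 hℓ])
  · simp only [sub_self, abs_zero]
    positivity

lemma summable_locC_sub_one (r : ℤ) {h : ℕ} (hh : 0 < h) :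
    Summable fun ℓ ↦ locC r h ℓ - 1 := by
  have hsq : Summable fun ℓ : ℕ ↦ 2 / (ℓ : ℝ) ^ 2 := by
    simpa [div_eq_mul_inv] using (Real.summable_nat_pow_inv.mpr one_lt_two).mul_left 2
  refine hsq.of_norm_bounded_eventually_nat ?_
  filter_upwards [Filter.eventually_gt_atTop h] with ℓ hℓ
  exact abs_locC_sub_one_le_of_not_dvd r fun hdvd ↦ (Nat.le_of_dvd hh hdvd).not_gt hℓ

lemma summable_log_locC (r : ℤ) {h : ℕ} (hh : 0 < h) :
    Summable fun ℓ ↦ Real.log (locC r h ℓ) := by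
  simpa using Real.summable_log_one_add_of_summable (summable_locC_sub_one r hh)

theorem stmt15_general (h : ℕ) (hpos : 0 < h) (r : ℤ) :
    Multipliable (locC r h) ∧ 0 < frakC r h := by
  have hlog := summable_log_locC r hpos
  refine ⟨Real.multipliable_of_summable_log (locC_pos r h) hlog, ?_⟩
  have hprod : 0 < ∏' ℓ, locC r h ℓ := by
    rw [← Real.rexp_tsum_eq_tprod (locC_pos r h) hlog]
    exact Real.exp_pos _
  have hh : (0 : ℝ) < h := by exact_mod_cast hpos
  unfold frakC
  positivity

/-- for `h` a positive odd integer and `r` an integer with `gcd(r,h)`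
squarefree, the infinite product defining `𝔠(r,h)` converges and `𝔠(r,h) > 0`. -/
theorem stmt15 (h : ℕ) (hpos : 0 < h) (hodd : Odd h) (r : ℤ)
    (hsf : Squarefree (Int.gcd r (h : ℤ))) :
    Multipliable (locC r h) ∧ 0 < frakC r h :=
  stmt15_general h hpos r
end
end

section
/- Let ℓ be an odd prime. Then #{ g ∈ GL₂(ℤ/ℓ²ℤ) : tr(g)² − 4·det(g) ≢ 0 (mod ℓ²) } = ((ℓ⁴−2ℓ²−ℓ+1)/(ℓ²(ℓ²−1))) · #GL₂(ℤ/ℓ²ℤ); equivalently, this cardinality equals ℓ³(ℓ−1)(ℓ⁴−2ℓ²−ℓ+1). -/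
/-!
Over `R = ℤ/ℓ²ℤ`, in which `2` is invertible, `!![a, b; c, d] ↦ (a + d, a - d, b, -4c)` identifies
the matrices with unit determinant and zero discriminant with the quadruples `(s, t, b', c')` where
`s` is a unit and `b'c' = t²`: indeed `4 det = tr² - disc` and `disc = (a - d)² + 4bc`.
The nonunits of `R` are the `ℓ` multiples of `ℓ`, and any two of them multiply to `0`, so splitting
on whether `t` is a unit gives `ℓ⁴ + ℓ³ - ℓ²` solutions of `b'c' = t²`. Subtracting the resulting
`ℓ³(ℓ - 1)(ℓ² + ℓ - 1)` matrices from `#GL₂(R) = ℓ⁴ · #GL₂(𝔽_ℓ)` (a determinant is a unit exactly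
when its reduction mod `ℓ` is) leaves the claimed count.
-/

def glDisc (m : ℕ) (g : Matrix.GeneralLinearGroup (Fin 2) (ZMod m)) : ZMod m :=
  (Matrix.trace (g : Matrix (Fin 2) (Fin 2) (ZMod m))) ^ 2 -
    4 * Matrix.det (g : Matrix (Fin 2) (Fin 2) (ZMod m))

open Finset

section Counting

variable {α β : Type*} [Fintype α] [Fintype β]

theorem Finset.card_filter_prod_and (p : α → Prop) (q : β → Prop) [DecidablePred p]
    [DecidablePred q] : #{x : α × β | p x.1 ∧ q x.2} = #{a | p a} * #{b | q b} := by
  rw [← card_product, ← filter_product, univ_product_univ]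

theorem Finset.card_filter_prod_eq_sum (P : α × β → Prop) [DecidablePred P] :
    #{x | P x} = ∑ a, #{b | P (a, b)} := by
  simp only [card_filter, Fintype.sum_prod_type]

theorem AddMonoidHom.card_filter_comp_mul_card {G H : Type*} [AddGroup G] [AddGroup H]
    [Fintype G] [Fintype H] [DecidableEq H] (f : G →+ H) (hf : Function.Surjective f)
    (P : H → Prop) [DecidablePred P] :
    #{x | P (f x)} * Fintype.card H = Fintype.card G * #{y | P y} := by
  have hcount (Q : H → Prop) [DecidablePred Q] :
      #{x | Q (f x)} = #{y | Q y} * #{x | f x = 0} := by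
    rw [← sum_const_nat fun y _ =>
        AddMonoidHom.card_fiber_eq_of_mem_range f (hf y) ⟨0, map_zero f⟩,
      sum_card_fiberwise_eq_card_filter]
    simp only [mem_filter, mem_univ, true_and]
  have htotal := hcount fun _ => True
  simp only [filter_true, card_univ] at htotal
  rw [hcount, htotal]
  ring

theorem card_filter_units_val {M : Type*} [Monoid M] [Fintype M] [DecidableEq M] (P : M → Prop)
    [DecidablePred P] : #{u : Mˣ | P u} = #{x | IsUnit x ∧ P x} := by
  rw [← card_map ⟨Units.val, Units.val_injective⟩]
  congr 1
  ext x
  simp only [IsUnit, mem_map, mem_filter, mem_univ, true_and, Function.Embedding.coeFn_mk]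
  grind

theorem card_filter_mul_eq_of_isUnit {M : Type*} [CommMonoid M] [Fintype M] [DecidableEq M]
    {u : M} (hu : IsUnit u) : #{x : M × M | x.1 * x.2 = u} = #{x : M | IsUnit x} := by
  refine card_nbij Prod.fst (fun x hx => ?_) (fun x hx y hy hxy => ?_) (fun v hv => ?_)
  · simp only [coe_filter, mem_univ, true_and, Set.mem_ofPred_eq] at hx ⊢
    exact isUnit_of_mul_isUnit_left (hx ▸ hu)
  · simp only [coe_filter, mem_univ, true_and, Set.mem_ofPred_eq] at hx hy
    have hx1 : IsUnit x.1 := isUnit_of_mul_isUnit_left (hx ▸ hu)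
    exact Prod.ext hxy (hx1.mul_left_cancel (by rw [hx, hxy, hy]))
  · simp only [coe_filter, mem_univ, true_and, Set.mem_ofPred_eq] at hv
    exact ⟨(v, ↑hv.unit⁻¹ * u), by simp [← mul_assoc], rfl⟩

theorem Fintype.card_matrix (m n R : Type*) [Fintype m] [DecidableEq m] [Fintype n]
    [DecidableEq n] [Fintype R] :
    Fintype.card (Matrix m n R) = Fintype.card R ^ (Fintype.card m * Fintype.card n) := by
  change Fintype.card (m → n → R) = _
  simp [pow_mul']

end Counting

theorem Matrix.GeneralLinearGroup.natCard_subtype {n R : Type*} [Fintype n] [DecidableEq n]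
    [CommRing R] [Fintype R] [DecidableEq R] (P : Matrix n n R → Prop) [DecidablePred P] :
    Nat.card {g : GL n R // P g} = #{A : Matrix n n R | IsUnit A.det ∧ P A} := by
  simp only [Nat.card_eq_fintype_card, Fintype.card_subtype, card_filter_units_val,
    Matrix.isUnit_iff_isUnit_det]

theorem Matrix.GeneralLinearGroup.natCard_eq_card_filter_isUnit_det {n R : Type*} [Fintype n]
    [DecidableEq n] [CommRing R] [Fintype R] [DecidableEq R] :
    Nat.card (GL n R) = #{A : Matrix n n R | IsUnit A.det} := by
  simpa using natCard_subtype (n := n) (R := R) fun _ => True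

section DiscriminantZero

variable {R : Type*} [CommRing R] [Fintype R] [DecidableEq R] [Invertible (2 : R)]

theorem card_isUnit_det_and_disc_eq_zero :
    #{A : Matrix (Fin 2) (Fin 2) R | IsUnit A.det ∧ A.trace ^ 2 - 4 * A.det = 0} =
      #{s : R | IsUnit s} * #{x : R × R × R | x.2.1 * x.2.2 = x.1 ^ 2} := by
  have h2 : (2 : R) * ⅟2 = 1 := mul_invOf_self 2
  have h4 : IsUnit (4 : R) := by
    simpa [show (4 : R) = 2 * 2 by norm_num] using (isUnit_of_invertible (2 : R)).mul
      (isUnit_of_invertible (2 : R))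
  rw [← card_filter_prod_and]
  refine card_nbij' (fun A => (A.trace, A 0 0 - A 1 1, A 0 1, -4 * A 1 0))
    (fun x => !![⅟2 * (x.1 + x.2.1), x.2.2.1; -(⅟2 * ⅟2) * x.2.2.2, ⅟2 * (x.1 - x.2.1)])
    (fun A hA => ?_) (fun x hx => ?_) (fun A _ => ?_) (fun x _ => ?_)
  · simp only [coe_filter, mem_univ, true_and, Set.mem_ofPred_eq, Matrix.trace_fin_two,
      Matrix.det_fin_two] at hA ⊢
    obtain ⟨hdet, hdisc⟩ := hA
    refine ⟨isUnit_of_mul_isUnit_left (y := A 0 0 + A 1 1) ?_, by linear_combination -hdisc⟩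
    rw [← sq, show (A 0 0 + A 1 1) ^ 2 = 4 * (A 0 0 * A 1 1 - A 0 1 * A 1 0) by
      linear_combination hdisc]
    exact h4.mul hdet
  · simp only [coe_filter, mem_univ, true_and, Set.mem_ofPred_eq, Matrix.trace_fin_two_of,
      Matrix.det_fin_two_of] at hx ⊢
    obtain ⟨hs, hx⟩ := hx
    refine ⟨?_, ?_⟩
    · rw [show ⅟2 * (x.1 + x.2.1) * (⅟2 * (x.1 - x.2.1)) - x.2.2.1 * (-(⅟2 * ⅟2) * x.2.2.2)
          = (⅟2 * x.1) ^ 2 by linear_combination (⅟2 * ⅟2) * hx]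
      exact ((isUnit_of_invertible _).mul hs).pow 2
    · linear_combination (2 * ⅟2 + 1) * (x.2.1 ^ 2 - x.2.2.1 * x.2.2.2) * h2 - hx
  · ext i j
    fin_cases i <;> fin_cases j <;>
      simp only [Matrix.trace_fin_two, Fin.zero_eta, Fin.mk_one, Matrix.of_apply,
        Matrix.cons_val', Matrix.cons_val_zero, Matrix.cons_val_one, Matrix.cons_val_fin_one] <;>
      grind
  · simp only [Matrix.trace_fin_two_of, Matrix.of_apply, Matrix.cons_val', Matrix.cons_val_zero,
      Matrix.cons_val_one, Matrix.cons_val_fin_one]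
    grind

end DiscriminantZero

theorem natCard_glDisc_ne_zero_add_card {m : ℕ} [NeZero m] [Invertible (2 : ZMod m)] :
    Nat.card {g : GL (Fin 2) (ZMod m) // glDisc m g ≠ 0} +
      #{s : ZMod m | IsUnit s} * #{x : ZMod m × ZMod m × ZMod m | x.2.1 * x.2.2 = x.1 ^ 2} =
      Nat.card (GL (Fin 2) (ZMod m)) := by
  rw [← card_isUnit_det_and_disc_eq_zero,
    show Nat.card {g : GL (Fin 2) (ZMod m) // glDisc m g ≠ 0} = _ from
      Matrix.GeneralLinearGroup.natCard_subtype fun A => A.trace ^ 2 - 4 * A.det ≠ 0,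
    Matrix.GeneralLinearGroup.natCard_eq_card_filter_isUnit_det, add_comm]
  simpa only [filter_filter] using card_filter_add_card_filter_not
    (s := {A : Matrix (Fin 2) (Fin 2) (ZMod m) | IsUnit A.det})
    fun A => A.trace ^ 2 - 4 * A.det = 0

namespace ZMod

variable {p : ℕ} [hp : Fact p.Prime]

local notation "𝓡" => ZMod (p ^ 2)

theorem not_isUnit_iff_exists_eq_mul {x : 𝓡} : ¬IsUnit x ↔ ∃ k : 𝓡, x = (p : 𝓡) * k := by
  constructor
  · intro hx
    rw [← natCast_zmod_val x, isUnit_natCast_iff_not_dvd_pow hp.out two_pos, not_not] at hx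
    obtain ⟨m, hm⟩ := hx
    exact ⟨m, by rw [← natCast_zmod_val x, hm, Nat.cast_mul]⟩
  · rintro ⟨k, rfl⟩ hx
    exact prime_natCast_not_isUnit_pow hp.out two_pos (isUnit_of_mul_isUnit_left hx)

theorem mul_eq_zero_of_not_isUnit {x y : 𝓡} (hx : ¬IsUnit x) (hy : ¬IsUnit y) :
    x * y = 0 := by
  obtain ⟨k, rfl⟩ := not_isUnit_iff_exists_eq_mul.mp hx
  obtain ⟨m, rfl⟩ := not_isUnit_iff_exists_eq_mul.mp hy
  rw [show (p : 𝓡) * k * (p * m) = ((p ^ 2 : ℕ) : 𝓡) * (k * m) by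
    push_cast; ring, natCast_self, zero_mul]

theorem isUnit_iff_isUnit_castHom (x : 𝓡) :
    IsUnit x ↔ IsUnit (castHom (dvd_pow_self p two_ne_zero) (ZMod p) x) := by
  rw [← natCast_zmod_val x, map_natCast, isUnit_natCast_iff_not_dvd_pow hp.out two_pos,
    isUnit_iff_ne_zero, Ne, natCast_eq_zero_iff]

theorem card_isUnit_prime_sq : #{x : 𝓡 | IsUnit x} = p * (p - 1) := by
  have := card_filter_units_val (M := 𝓡) fun _ => True
  simp only [filter_true, card_univ, and_true] at this
  rw [← this, card_units_eq_totient, Nat.totient_prime_pow_succ hp.out, pow_one]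

theorem card_not_isUnit_prime_sq : #{x : 𝓡 | ¬IsUnit x} = p := by
  have := card_filter_add_card_filter_not (s := (univ : Finset 𝓡)) IsUnit
  rw [card_isUnit_prime_sq, card_univ, card] at this
  have hp1 : p * (p - 1) + p = p ^ 2 := by
    rw [sq, ← Nat.mul_add_one, Nat.sub_add_cancel hp.out.one_le]
  linarith

/-- A zero product has a unit left factor and zero right factor, or the reverse, or two nonunit
factors. -/
theorem card_mul_eq_zero_prime_sq : #{x : 𝓡 × 𝓡 | x.1 * x.2 = 0} = 2 * (p * (p - 1)) + p * p := by
  have hleft : #{x : 𝓡 × 𝓡 | x.1 * x.2 = 0 ∧ IsUnit x.1} =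
      #{a : 𝓡 | IsUnit a} * #{b : 𝓡 | b = 0} := by
    rw [← card_filter_prod_and]
    congr 1
    ext x
    simp only [mem_filter, mem_univ, true_and]
    grind [IsUnit.mul_right_eq_zero]
  have hright : #{x : 𝓡 × 𝓡 | (x.1 * x.2 = 0 ∧ ¬IsUnit x.1) ∧ IsUnit x.2} =
      #{a : 𝓡 | a = 0} * #{b : 𝓡 | IsUnit b} := by
    rw [← card_filter_prod_and]
    congr 1
    ext x
    simp only [mem_filter, mem_univ, true_and]
    have : Nontrivial 𝓡 := nontrivial_iff.2 (Nat.one_lt_pow two_ne_zero hp.out.one_lt).ne'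
    grind [IsUnit.mul_left_eq_zero, not_isUnit_zero]
  have hboth : #{x : 𝓡 × 𝓡 | (x.1 * x.2 = 0 ∧ ¬IsUnit x.1) ∧ ¬IsUnit x.2} =
      #{a : 𝓡 | ¬IsUnit a} * #{b : 𝓡 | ¬IsUnit b} := by
    rw [← card_filter_prod_and]
    congr 1
    ext x
    simp only [mem_filter, mem_univ, true_and]
    grind [mul_eq_zero_of_not_isUnit]
  have hnonunit := card_filter_add_card_filter_not
    (s := {x : 𝓡 × 𝓡 | x.1 * x.2 = 0 ∧ ¬IsUnit x.1}) (fun x => IsUnit x.2)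
  rw [← card_filter_add_card_filter_not (fun x => IsUnit x.1)]
  simp only [filter_filter] at hnonunit ⊢
  rw [← hnonunit, hleft, hright, hboth, card_isUnit_prime_sq, card_not_isUnit_prime_sq, filter_eq']
  simp only [mem_univ, if_true, card_singleton]
  ring

theorem card_mul_eq_sq_prime_sq :
    #{x : 𝓡 × 𝓡 × 𝓡 | x.2.1 * x.2.2 = x.1 ^ 2} =
      p * (p - 1) * (p * (p - 1)) + p * (2 * (p * (p - 1)) + p * p) := by
  rw [card_filter_prod_eq_sum, ← sum_filter_add_sum_filter_not _ IsUnit,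
    sum_const_nat (m := p * (p - 1)) fun t ht => ?_,
    sum_const_nat (m := 2 * (p * (p - 1)) + p * p) fun t ht => ?_, card_isUnit_prime_sq,
    card_not_isUnit_prime_sq]
  · rw [← card_mul_eq_zero_prime_sq (p := p)]
    simp only [mem_filter, mem_univ, true_and] at ht
    simp only [sq t, mul_eq_zero_of_not_isUnit ht ht]
  · rw [← card_isUnit_prime_sq]
    exact card_filter_mul_eq_of_isUnit ((mem_filter.mp ht).2.pow 2)

theorem natCard_GL_prime_sq :
    Nat.card (GL (Fin 2) 𝓡) = p ^ 4 * ((p ^ 2 - 1) * (p ^ 2 - p)) := by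
  let φ := (castHom (dvd_pow_self p two_ne_zero) (ZMod p)).mapMatrix (m := Fin 2)
  have hφ : Function.Surjective φ := fun B =>
    ⟨B.map fun y => (y.val : 𝓡), by ext; simp [φ]⟩
  have hcount := AddMonoidHom.card_filter_comp_mul_card φ.toAddMonoidHom hφ
    fun B : Matrix (Fin 2) (Fin 2) (ZMod p) => IsUnit B.det
  simp only [RingHom.toAddMonoidHom_eq_coe, AddMonoidHom.coe_coe, φ, ← RingHom.map_det,
    ← isUnit_iff_isUnit_castHom] at hcount
  rw [← Matrix.GeneralLinearGroup.natCard_eq_card_filter_isUnit_det,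
    ← Matrix.GeneralLinearGroup.natCard_eq_card_filter_isUnit_det, Matrix.card_GL_field,
    Fintype.card_matrix, Fintype.card_matrix] at hcount
  simp only [Fintype.card_fin, card, Fin.prod_univ_two, Fin.val_zero, Fin.val_one, pow_zero,
    pow_one] at hcount
  refine Nat.eq_of_mul_eq_mul_right (pow_pos hp.out.pos 4) ?_
  rw [hcount]
  ring

theorem isUnit_two_prime_sq (hp2 : p ≠ 2) : IsUnit (2 : 𝓡) := by
  have := (isUnit_natCast_iff_not_dvd_pow (a := 2) hp.out two_pos).2
    fun h => hp2 ((Nat.prime_dvd_prime_iff_eq hp.out Nat.prime_two).1 h)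
  simpa using this

end ZMod

/-- for an odd prime `ℓ`, the number of `g ∈ GL₂(ℤ/ℓ²ℤ)` with
`tr(g)² - 4 det(g) ≢ 0 (mod ℓ²)` equals
`(ℓ⁴-2ℓ²-ℓ+1)/(ℓ²(ℓ²-1)) · #GL₂(ℤ/ℓ²ℤ) = ℓ³(ℓ-1)(ℓ⁴-2ℓ²-ℓ+1)`. -/
theorem stmt17 (ℓ : ℕ) (hℓ : ℓ.Prime) (hℓ2 : ℓ ≠ 2) :
    (Nat.card {g : Matrix.GeneralLinearGroup (Fin 2) (ZMod (ℓ ^ 2)) //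
        glDisc (ℓ ^ 2) g ≠ 0} : ℤ) =
      (ℓ : ℤ) ^ 3 * ((ℓ : ℤ) - 1) * ((ℓ : ℤ) ^ 4 - 2 * (ℓ : ℤ) ^ 2 - (ℓ : ℤ) + 1) ∧
    (Nat.card {g : Matrix.GeneralLinearGroup (Fin 2) (ZMod (ℓ ^ 2)) //
        glDisc (ℓ ^ 2) g ≠ 0} : ℝ) =
      ((ℓ : ℝ) ^ 4 - 2 * (ℓ : ℝ) ^ 2 - (ℓ : ℝ) + 1) / ((ℓ : ℝ) ^ 2 * ((ℓ : ℝ) ^ 2 - 1)) *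
        (Nat.card (Matrix.GeneralLinearGroup (Fin 2) (ZMod (ℓ ^ 2))) : ℝ) := by
  have := Fact.mk hℓ
  let := (ZMod.isUnit_two_prime_sq hℓ2).invertible
  have hsplit := natCard_glDisc_ne_zero_add_card (m := ℓ ^ 2)
  rw [ZMod.card_isUnit_prime_sq, ZMod.card_mul_eq_sq_prime_sq, ZMod.natCard_GL_prime_sq] at hsplit
  have hcount : (Nat.card {g : GL (Fin 2) (ZMod (ℓ ^ 2)) // glDisc (ℓ ^ 2) g ≠ 0} : ℤ) =
      (ℓ : ℤ) ^ 3 * ((ℓ : ℤ) - 1) * ((ℓ : ℤ) ^ 4 - 2 * (ℓ : ℤ) ^ 2 - (ℓ : ℤ) + 1) := by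
    have := congrArg (Nat.cast : ℕ → ℤ) hsplit
    push_cast [Nat.cast_sub hℓ.one_le, Nat.cast_sub (Nat.one_le_pow 2 ℓ hℓ.pos),
      Nat.cast_sub (Nat.le_self_pow two_ne_zero ℓ)] at this
    linear_combination this
  refine ⟨hcount, ?_⟩
  have hℓ1 : (ℓ : ℝ) ^ 2 - 1 ≠ 0 := by
    have : (1 : ℝ) < ℓ ^ 2 := by exact_mod_cast Nat.one_lt_pow two_ne_zero hℓ.one_lt
    linarith
  rw [← Int.cast_natCast, hcount, ZMod.natCard_GL_prime_sq]
  push_cast [Nat.cast_sub hℓ.one_le, Nat.cast_sub (Nat.one_le_pow 2 ℓ hℓ.pos),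
    Nat.cast_sub (Nat.le_self_pow two_ne_zero ℓ)]
  field_simp
end

section
/- Let ℓ be an odd prime, r an integer with ℓ | r, α ≥ 1 an integer, β = max(α, 2), and let N(ℓ,r,α) = #{ g ∈ GL₂(ℤ/ℓ^βℤ) : tr(g)² − 4·det(g) ≢ 0 (mod ℓ²) and tr(g)² − 4·det(g) ≡ r (mod ℓ^α) }. Then: (i) if α = 1, N(ℓ,r,α)/#GL₂(ℤ/ℓ^βℤ) = (ℓ−1)/ℓ²; (ii) if α ≥ 2 and ℓ² ∤ r, N(ℓ,r,α)/#GL₂(ℤ/ℓ^βℤ) = 1/ℓ^α; (iii) if α ≥ 2 and ℓ² | r, N(ℓ,r,α) = 0. -/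
/-- The number `N(ℓ,r,α)` of `g ∈ GL₂(ℤ/ℓ^max(α,2)ℤ)` with
`tr(g)² - 4 det(g) ≢ 0 (mod ℓ²)` and `tr(g)² - 4 det(g) ≡ r (mod ℓ^α)`;
the congruence conditions are imposed on the canonical representative
`(glDisc _ g).val`. -/
noncomputable def glCount (ℓ : ℕ) (r : ℤ) (α : ℕ) : ℕ :=
  Nat.card {g : Matrix.GeneralLinearGroup (Fin 2) (ZMod (ℓ ^ max α 2)) //
    ¬ (ℓ ^ 2 ∣ (glDisc (ℓ ^ max α 2) g).val) ∧
      ((glDisc (ℓ ^ max α 2) g).val : ℤ) ≡ r [ZMOD ((ℓ : ℤ) ^ α)]}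

open Matrix

section Basic
variable {ℓ β : ℕ} (hp : ℓ.Prime) (hβ : 2 ≤ β)
include hp hβ

lemma ell_lt_pow : ℓ < ℓ ^ β := by
  calc ℓ = ℓ ^ 1 := (pow_one ℓ).symm
    _ < ℓ ^ β := Nat.pow_lt_pow_right hp.one_lt (by omega)

lemma cast_dvd_iff (a : ZMod (ℓ ^ β)) :
    (ℓ : ZMod (ℓ ^ β)) ∣ a ↔ ℓ ∣ a.val := by
  haveI : NeZero (ℓ ^ β) := ⟨pow_ne_zero _ hp.pos.ne'⟩
  constructor
  · rintro ⟨y, rfl⟩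
    have h1 : ((ℓ : ZMod (ℓ ^ β)) * y).val = (ℓ * y.val) % ℓ ^ β := by
      rw [ZMod.val_mul, ZMod.val_cast_of_lt (ell_lt_pow hp hβ)]
    rw [h1, Nat.dvd_mod_iff (dvd_pow_self ℓ (by omega : β ≠ 0))]
    exact Dvd.intro _ rfl
  · rintro ⟨k, hk⟩
    have : a = ((ℓ * k : ℕ) : ZMod (ℓ ^ β)) := by
      rw [← hk, ZMod.natCast_val, ZMod.cast_id]
    rw [this]
    push_cast
    exact Dvd.intro _ rfl

lemma unit_iff (a : ZMod (ℓ ^ β)) : IsUnit a ↔ ¬ ℓ ∣ a.val := by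
  haveI : NeZero (ℓ ^ β) := ⟨pow_ne_zero _ hp.pos.ne'⟩
  have h1 : a = ((a.val : ℕ) : ZMod (ℓ ^ β)) := by rw [ZMod.natCast_val, ZMod.cast_id]
  rw [h1]
  rw [ZMod.isUnit_iff_coprime, ZMod.val_natCast]
  have : (a.val % ℓ ^ β) = a.val := Nat.mod_eq_of_lt a.val_lt
  rw [this, Nat.coprime_pow_right_iff (by omega), Nat.coprime_comm]
  exact hp.coprime_iff_not_dvd

lemma unit_iff' (a : ZMod (ℓ ^ β)) : IsUnit a ↔ ¬ (ℓ : ZMod (ℓ ^ β)) ∣ a := by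
  rw [unit_iff hp hβ, cast_dvd_iff hp hβ]

end Basic

section Counting

variable {M : Type*} [Monoid M]

/-- units subtype equiv -/
noncomputable def unitsEquivSubtype (P : M → Prop) : {u : Mˣ // P ↑u} ≃ {A : M // IsUnit A ∧ P A} where
  toFun u := ⟨↑u.1, u.1.isUnit, u.2⟩
  invFun A := ⟨A.2.1.unit, by rw [A.2.1.unit_spec]; exact A.2.2⟩
  left_inv u := by
    ext
    exact u.1.isUnit.unit_spec
  right_inv A := by
    ext
    exact A.2.1.unit_spec

variable {δ : Type*} [Fintype δ]

lemma card_split (P Q : δ → Prop) :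
    Nat.card {x // Q x} = Nat.card {x // P x ∧ Q x} + Nat.card {x // ¬ P x ∧ Q x} := by
  classical
  rw [Nat.card_eq_fintype_card, Nat.card_eq_fintype_card, Nat.card_eq_fintype_card,
    Fintype.card_subtype, Fintype.card_subtype, Fintype.card_subtype]
  rw [← Finset.card_filter_add_card_filter_not (p := P) (s := Finset.univ.filter Q)]
  congr 1 <;> (rw [Finset.filter_filter]; congr 1; ext x; simp; tauto)

lemma card_sigma_eq {α γ : Type*} [Fintype α] [Fintype γ] (P : α → Prop) (Q : α → γ → Prop)
    (n : ℕ) (h : ∀ a, P a → Nat.card {y // Q a y} = n) :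
    Nat.card {p : α × γ // P p.1 ∧ Q p.1 p.2} = Nat.card {a // P a} * n := by
  classical
  have e : {p : α × γ // P p.1 ∧ Q p.1 p.2} ≃ Σ a : {a // P a}, {y // Q a.1 y} :=
    { toFun := fun p => ⟨⟨p.1.1, p.2.1⟩, ⟨p.1.2, p.2.2⟩⟩
      invFun := fun q => ⟨(q.1.1, q.2.1), q.1.2, q.2.2⟩
      left_inv := fun p => rfl
      right_inv := fun q => rfl }
  rw [Nat.card_congr e, Nat.card_eq_fintype_card, Fintype.card_sigma]
  rw [Nat.card_eq_fintype_card]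
  have : ∀ a : {a // P a}, Fintype.card {y // Q a.1 y} = n := by
    intro a
    rw [← Nat.card_eq_fintype_card]
    exact h a.1 a.2
  simp [this, Finset.sum_const, Finset.card_univ]

lemma card_fiber_partition {α γ : Type*} [Fintype α] [Fintype γ] (f : α → γ) (P : γ → Prop)
    (n : ℕ) (h : ∀ s, P s → Nat.card {a // f a = s} = n) :
    Nat.card {a // P (f a)} = Nat.card {s // P s} * n := by
  classical
  have e : {a // P (f a)} ≃ Σ s : {s // P s}, {a // f a = s.1} :=
    { toFun := fun a => ⟨⟨f a.1, a.2⟩, ⟨a.1, rfl⟩⟩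
      invFun := fun q => ⟨q.2.1, by rw [q.2.2]; exact q.1.2⟩
      left_inv := fun a => rfl
      right_inv := fun q => by
        obtain ⟨⟨s, hs⟩, ⟨a, ha⟩⟩ := q
        simp only at ha
        subst ha
        rfl }
  rw [Nat.card_congr e, Nat.card_eq_fintype_card, Fintype.card_sigma, Nat.card_eq_fintype_card]
  have : ∀ s : {s // P s}, Fintype.card {a // f a = s.1} = n := by
    intro s
    rw [← Nat.card_eq_fintype_card]
    exact h s.1 s.2
  simp [this, Finset.sum_const, Finset.card_univ]

end Counting

section Pairs
variable {M : Type*} [CommMonoid M]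

noncomputable def eUnitFst (m : M) : Mˣ ≃ {p : M × M // IsUnit p.1 ∧ p.1 * p.2 = m} where
  toFun u := ⟨(↑u, ↑u⁻¹ * m), u.isUnit, by rw [← mul_assoc, u.mul_inv, one_mul]⟩
  invFun p := p.2.1.unit
  left_inv u := Units.ext u.isUnit.unit_spec
  right_inv p := by
    obtain ⟨⟨b, c⟩, hb, he⟩ := p
    ext
    · exact hb.unit_spec
    · show ↑hb.unit⁻¹ * m = c
      rw [← he, ← mul_assoc]
      rw [Units.inv_mul_of_eq hb.unit_spec, one_mul]

noncomputable def eUnitSnd (m : M) : Mˣ ≃ {p : M × M // IsUnit p.2 ∧ p.1 * p.2 = m} :=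
  (eUnitFst m).trans
    { toFun := fun p => ⟨(p.1.2, p.1.1), p.2.1, by rw [mul_comm]; exact p.2.2⟩
      invFun := fun p => ⟨(p.1.2, p.1.1), p.2.1, by rw [mul_comm]; exact p.2.2⟩
      left_inv := fun p => rfl
      right_inv := fun p => rfl }

end Pairs

section PairCount
variable {ℓ β : ℕ} (hp : ℓ.Prime) (hβ : 2 ≤ β)
include hp hβ

lemma cast_dvd_iff'' (d : ℕ) (hd : d ∣ ℓ ^ β) (a : ZMod (ℓ ^ β)) :
    (d : ZMod (ℓ ^ β)) ∣ a ↔ d ∣ a.val := by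
  haveI : NeZero (ℓ ^ β) := ⟨pow_ne_zero _ hp.pos.ne'⟩
  constructor
  · rintro ⟨y, rfl⟩
    have h1 : ((d : ZMod (ℓ ^ β)) * y).val = ((d % ℓ ^ β) * y.val) % ℓ ^ β := by
      rw [ZMod.val_mul, ZMod.val_natCast]
    rw [h1, Nat.dvd_mod_iff hd]
    exact ((Nat.dvd_mod_iff hd).mpr dvd_rfl).mul_right _
  · rintro ⟨k, hk⟩
    have : a = ((d * k : ℕ) : ZMod (ℓ ^ β)) := by
      rw [← hk, ZMod.natCast_val, ZMod.cast_id]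
    rw [this]
    push_cast
    exact Dvd.intro _ rfl

lemma card_pairs_unit {m : ZMod (ℓ ^ β)} (hm : IsUnit m) :
    Nat.card {p : ZMod (ℓ ^ β) × ZMod (ℓ ^ β) // p.1 * p.2 = m} =
      Nat.card (ZMod (ℓ ^ β))ˣ := by
  have e1 : {p : ZMod (ℓ ^ β) × ZMod (ℓ ^ β) // p.1 * p.2 = m} ≃
      {p : ZMod (ℓ ^ β) × ZMod (ℓ ^ β) // IsUnit p.1 ∧ p.1 * p.2 = m} :=
    Equiv.subtypeEquivRight (fun p => by
      constructor
      · intro h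
        exact ⟨isUnit_of_mul_isUnit_left (h ▸ hm), h⟩
      · exact fun h => h.2)
  rw [Nat.card_congr e1, ← Nat.card_congr (eUnitFst m)]

lemma nonunit_of_ell_dvd {a : ZMod (ℓ ^ β)} (h : (ℓ : ZMod (ℓ ^ β)) ∣ a) : ¬ IsUnit a :=
  fun hu => ((unit_iff' hp hβ a).mp hu) h

lemma mul_cast_val {w : ZMod (ℓ ^ β)} :
    ((ℓ : ZMod (ℓ ^ β)) * w).val = (ℓ * w.val) % ℓ ^ β := by
  haveI : NeZero (ℓ ^ β) := ⟨pow_ne_zero _ hp.pos.ne'⟩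
  have h : (ℓ : ZMod (ℓ ^ β)) * w = ((ℓ * w.val : ℕ) : ZMod (ℓ ^ β)) := by
    push_cast
    rw [ZMod.natCast_val, ZMod.cast_id]
  rw [h, ZMod.val_natCast]

lemma sq_dvd_pow : ℓ * ℓ ∣ ℓ ^ β := by
  have h : ℓ * ℓ = ℓ ^ 2 := by ring
  rw [h]; exact pow_dvd_pow ℓ hβ

lemma card_pairs_vone {w : ZMod (ℓ ^ β)} (hw : IsUnit w) :
    Nat.card {p : ZMod (ℓ ^ β) × ZMod (ℓ ^ β) // p.1 * p.2 = (ℓ : ZMod (ℓ ^ β)) * w} =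
      2 * Nat.card (ZMod (ℓ ^ β))ˣ := by
  haveI : NeZero (ℓ ^ β) := ⟨pow_ne_zero _ hp.pos.ne'⟩
  rw [card_split (fun p : ZMod (ℓ ^ β) × ZMod (ℓ ^ β) => IsUnit p.1)]
  have h1 : Nat.card {p : ZMod (ℓ ^ β) × ZMod (ℓ ^ β) //
      IsUnit p.1 ∧ p.1 * p.2 = (ℓ : ZMod (ℓ ^ β)) * w} = Nat.card (ZMod (ℓ ^ β))ˣ :=
    (Nat.card_congr (eUnitFst _)).symm
  have key : ∀ p : ZMod (ℓ ^ β) × ZMod (ℓ ^ β), p.1 * p.2 = (ℓ : ZMod (ℓ ^ β)) * w →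
      (¬ IsUnit p.1 ↔ IsUnit p.2) := by
    rintro ⟨b, c⟩ he
    simp only at he ⊢
    constructor
    · intro hb
      rw [unit_iff' hp hβ] at hb
      push_neg at hb
      by_contra hc
      rw [unit_iff' hp hβ] at hc
      push_neg at hc
      obtain ⟨b', rfl⟩ := hb
      obtain ⟨c', rfl⟩ := hc
      have hdvd : ((ℓ * ℓ : ℕ) : ZMod (ℓ ^ β)) ∣ (ℓ : ZMod (ℓ ^ β)) * w := by
        rw [← he]
        push_cast
        exact ⟨b' * c', by ring⟩
      rw [cast_dvd_iff'' hp hβ (ℓ * ℓ) (sq_dvd_pow hp hβ) _] at hdvd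
      rw [mul_cast_val hp hβ, Nat.dvd_mod_iff (sq_dvd_pow hp hβ)] at hdvd
      have h2 : ℓ ∣ w.val := (Nat.mul_dvd_mul_iff_left hp.pos).mp hdvd
      exact (unit_iff hp hβ w).mp hw h2
    · intro hc hb
      have h3 : IsUnit ((ℓ : ZMod (ℓ ^ β)) * w) := by
        rw [← he]
        exact hb.mul hc
      exact nonunit_of_ell_dvd hp hβ ⟨w, rfl⟩ h3
  have e2 : {p : ZMod (ℓ ^ β) × ZMod (ℓ ^ β) //
        ¬ IsUnit p.1 ∧ p.1 * p.2 = (ℓ : ZMod (ℓ ^ β)) * w} ≃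
      {p : ZMod (ℓ ^ β) × ZMod (ℓ ^ β) //
        IsUnit p.2 ∧ p.1 * p.2 = (ℓ : ZMod (ℓ ^ β)) * w} :=
    Equiv.subtypeEquivRight (fun p => by
      constructor
      · rintro ⟨ha, hb⟩
        exact ⟨(key p hb).mp ha, hb⟩
      · rintro ⟨ha, hb⟩
        exact ⟨fun hx => ((key p hb).mpr ha) hx |>.elim, hb⟩)
  have h2 : Nat.card {p : ZMod (ℓ ^ β) × ZMod (ℓ ^ β) //
      ¬ IsUnit p.1 ∧ p.1 * p.2 = (ℓ : ZMod (ℓ ^ β)) * w} = Nat.card (ZMod (ℓ ^ β))ˣ := by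
    rw [Nat.card_congr e2]
    exact (Nat.card_congr (eUnitSnd _)).symm
  rw [h1, h2]
  ring

end PairCount

noncomputable def isUnitEquivUnits {M : Type*} [Monoid M] : {x : M // IsUnit x} ≃ Mˣ where
  toFun x := x.2.unit
  invFun u := ⟨↑u, u.isUnit⟩
  left_inv x := Subtype.ext x.2.unit_spec
  right_inv u := Units.ext u.isUnit.unit_spec

section Cards
variable {ℓ β : ℕ} (hp : ℓ.Prime) (hβ : 2 ≤ β)
include hp hβ

lemma card_units_zmod :
    Nat.card (ZMod (ℓ ^ β))ˣ = ℓ ^ (β - 1) * (ℓ - 1) := by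
  haveI : NeZero (ℓ ^ β) := ⟨pow_ne_zero _ hp.pos.ne'⟩
  rw [Nat.card_eq_fintype_card, ZMod.card_units_eq_totient,
    Nat.totient_prime_pow hp (by omega)]

lemma card_isUnit_zmod :
    Nat.card {x : ZMod (ℓ ^ β) // IsUnit x} = ℓ ^ (β - 1) * (ℓ - 1) := by
  rw [Nat.card_congr isUnitEquivUnits]
  exact card_units_zmod hp hβ

lemma card_nonunit_zmod :
    Nat.card {x : ZMod (ℓ ^ β) // ¬ IsUnit x} = ℓ ^ (β - 1) := by
  classical
  haveI : NeZero (ℓ ^ β) := ⟨pow_ne_zero _ hp.pos.ne'⟩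
  rw [Nat.card_eq_fintype_card, Fintype.card_subtype_compl]
  have h1 : Fintype.card (ZMod (ℓ ^ β)) = ℓ ^ β := ZMod.card _
  have h2 : Fintype.card {x : ZMod (ℓ ^ β) // IsUnit x} = ℓ ^ (β - 1) * (ℓ - 1) := by
    rw [← Nat.card_eq_fintype_card]
    exact card_isUnit_zmod hp hβ
  rw [h1, h2]
  have h3 : ℓ ^ β = ℓ ^ (β - 1) * ℓ := by
    conv_lhs => rw [show β = (β - 1) + 1 by omega]
    rw [pow_succ]
  have h4 : ℓ ^ (β - 1) * (ℓ - 1) + ℓ ^ (β - 1) = ℓ ^ (β - 1) * ℓ := by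
    rw [← Nat.mul_succ]
    congr 1
    have := hp.pos
    omega
  omega

lemma exists_unit_rep {a : ZMod (ℓ ^ β)} (h1 : ℓ ∣ a.val) (h2 : ¬ ℓ ^ 2 ∣ a.val) :
    ∃ u : (ZMod (ℓ ^ β))ˣ, a = (ℓ : ZMod (ℓ ^ β)) * u := by
  haveI : NeZero (ℓ ^ β) := ⟨pow_ne_zero _ hp.pos.ne'⟩
  obtain ⟨k, hk⟩ := h1
  have hklt : k < ℓ ^ β := by
    have hv := a.val_lt
    have h5 : k ≤ ℓ * k := Nat.le_mul_of_pos_left k hp.pos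
    omega
  have hknd : ¬ ℓ ∣ k := by
    intro ⟨j, hj⟩
    exact h2 ⟨j, by rw [hk, hj]; ring⟩
  have hu : IsUnit ((k : ℕ) : ZMod (ℓ ^ β)) := by
    rw [unit_iff hp hβ, ZMod.val_natCast, Nat.mod_eq_of_lt hklt]
    exact hknd
  refine ⟨hu.unit, ?_⟩
  rw [hu.unit_spec]
  have : a = ((a.val : ℕ) : ZMod (ℓ ^ β)) := by rw [ZMod.natCast_val, ZMod.cast_id]
  rw [this, hk]
  push_cast
  ring

end Cards

section T
variable {ℓ β : ℕ} (hp : ℓ.Prime) (hℓ2 : ℓ ≠ 2) (hβ : 2 ≤ β)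
include hp hβ

lemma four_unit (hℓ2 : ℓ ≠ 2) : IsUnit (4 : ZMod (ℓ ^ β)) := by
  haveI : NeZero (ℓ ^ β) := ⟨pow_ne_zero _ hp.pos.ne'⟩
  have h : (4 : ZMod (ℓ ^ β)) = ((4 : ℕ) : ZMod (ℓ ^ β)) := by norm_num
  rw [h, unit_iff hp hβ, ZMod.val_natCast,
    Nat.dvd_mod_iff (dvd_pow_self ℓ (by omega : β ≠ 0))]
  intro hdvd
  have h4 : (4 : ℕ) = 2 ^ 2 := by norm_num
  rw [h4] at hdvd
  exact hℓ2 ((Nat.prime_dvd_prime_iff_eq hp Nat.prime_two).mp (hp.dvd_of_dvd_pow hdvd))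

lemma two_unit (hℓ2 : ℓ ≠ 2) : IsUnit (2 : ZMod (ℓ ^ β)) := by
  have h := four_unit hp hβ hℓ2
  have h4 : (4 : ZMod (ℓ ^ β)) = 2 * 2 := by norm_num
  rw [h4] at h
  exact isUnit_of_mul_isUnit_left h

include hℓ2

lemma cardT {w : ZMod (ℓ ^ β)} (hw : IsUnit w) :
    Nat.card {q : ZMod (ℓ ^ β) × ZMod (ℓ ^ β) × ZMod (ℓ ^ β) //
        q.1 ^ 2 + 4 * (q.2.1 * q.2.2) = (ℓ : ZMod (ℓ ^ β)) * w} =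
      (ℓ ^ (β - 1) * (ℓ - 1)) * (ℓ ^ (β - 1) * (ℓ - 1)) +
        ℓ ^ (β - 1) * (2 * (ℓ ^ (β - 1) * (ℓ - 1))) := by
  haveI : NeZero (ℓ ^ β) := ⟨pow_ne_zero _ hp.pos.ne'⟩
  have h4 := four_unit hp hβ hℓ2
  set i4 : ZMod (ℓ ^ β) := ↑h4.unit⁻¹ with hi4
  have h4key : (4 : ZMod (ℓ ^ β)) * i4 = 1 := Units.mul_inv_of_eq h4.unit_spec
  have hiff : ∀ (x : ZMod (ℓ ^ β)) (p : ZMod (ℓ ^ β) × ZMod (ℓ ^ β)),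
      (x ^ 2 + 4 * (p.1 * p.2) = (ℓ : ZMod (ℓ ^ β)) * w) ↔
        p.1 * p.2 = i4 * ((ℓ : ZMod (ℓ ^ β)) * w - x ^ 2) := by
    intro x p
    constructor
    · intro h
      linear_combination (-(p.1 * p.2)) * h4key + i4 * h
    · intro h
      linear_combination 4 * h + ((ℓ : ZMod (ℓ ^ β)) * w - x ^ 2) * h4key
  rw [card_split (fun q : ZMod (ℓ ^ β) × ZMod (ℓ ^ β) × ZMod (ℓ ^ β) => IsUnit q.1)]
  have part1 : Nat.card {q : ZMod (ℓ ^ β) × ZMod (ℓ ^ β) × ZMod (ℓ ^ β) //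
      IsUnit q.1 ∧ q.1 ^ 2 + 4 * (q.2.1 * q.2.2) = (ℓ : ZMod (ℓ ^ β)) * w} =
      (ℓ ^ (β - 1) * (ℓ - 1)) * (ℓ ^ (β - 1) * (ℓ - 1)) := by
    rw [card_sigma_eq (fun x : ZMod (ℓ ^ β) => IsUnit x)
      (fun (x : ZMod (ℓ ^ β)) (p : ZMod (ℓ ^ β) × ZMod (ℓ ^ β)) =>
        x ^ 2 + 4 * (p.1 * p.2) = (ℓ : ZMod (ℓ ^ β)) * w)
      (ℓ ^ (β - 1) * (ℓ - 1)) ?_, card_isUnit_zmod hp hβ]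
    intro x hx
    have e : {p : ZMod (ℓ ^ β) × ZMod (ℓ ^ β) //
        x ^ 2 + 4 * (p.1 * p.2) = (ℓ : ZMod (ℓ ^ β)) * w} ≃
        {p : ZMod (ℓ ^ β) × ZMod (ℓ ^ β) //
          p.1 * p.2 = i4 * ((ℓ : ZMod (ℓ ^ β)) * w - x ^ 2)} :=
      Equiv.subtypeEquivRight (fun p => hiff x p)
    rw [Nat.card_congr e, card_pairs_unit hp hβ ?_, card_units_zmod hp hβ]
    refine (IsUnit.unit h4)⁻¹.isUnit.mul ?_
    rw [unit_iff' hp hβ]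
    intro hdvd
    have hx2 : (ℓ : ZMod (ℓ ^ β)) ∣ x ^ 2 := by
      have := (Dvd.intro w rfl : (ℓ : ZMod (ℓ ^ β)) ∣ (ℓ : ZMod (ℓ ^ β)) * w)
      have h6 := dvd_sub this hdvd
      simpa using h6
    exact (unit_iff' hp hβ (x ^ 2)).mp (hx.pow 2) hx2
  have part2 : Nat.card {q : ZMod (ℓ ^ β) × ZMod (ℓ ^ β) × ZMod (ℓ ^ β) //
      ¬ IsUnit q.1 ∧ q.1 ^ 2 + 4 * (q.2.1 * q.2.2) = (ℓ : ZMod (ℓ ^ β)) * w} =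
      ℓ ^ (β - 1) * (2 * (ℓ ^ (β - 1) * (ℓ - 1))) := by
    rw [card_sigma_eq (fun x : ZMod (ℓ ^ β) => ¬ IsUnit x)
      (fun (x : ZMod (ℓ ^ β)) (p : ZMod (ℓ ^ β) × ZMod (ℓ ^ β)) =>
        x ^ 2 + 4 * (p.1 * p.2) = (ℓ : ZMod (ℓ ^ β)) * w)
      (2 * (ℓ ^ (β - 1) * (ℓ - 1))) ?_, card_nonunit_zmod hp hβ]
    intro x hx
    rw [unit_iff' hp hβ] at hx
    push_neg at hx
    obtain ⟨y, rfl⟩ := hx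
    have hw' : IsUnit (i4 * (w - (ℓ : ZMod (ℓ ^ β)) * y ^ 2)) := by
      refine (IsUnit.unit h4)⁻¹.isUnit.mul ?_
      rw [unit_iff' hp hβ]
      intro hdvd
      have h7 : (ℓ : ZMod (ℓ ^ β)) ∣ w := by
        have h8 := dvd_add hdvd (Dvd.intro (y ^ 2) rfl)
        simpa using h8
      exact (unit_iff' hp hβ w).mp hw h7
    have heq : i4 * ((ℓ : ZMod (ℓ ^ β)) * w - ((ℓ : ZMod (ℓ ^ β)) * y) ^ 2) =
        (ℓ : ZMod (ℓ ^ β)) * (i4 * (w - (ℓ : ZMod (ℓ ^ β)) * y ^ 2)) := by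
      ring
    have e : {p : ZMod (ℓ ^ β) × ZMod (ℓ ^ β) //
        ((ℓ : ZMod (ℓ ^ β)) * y) ^ 2 + 4 * (p.1 * p.2) = (ℓ : ZMod (ℓ ^ β)) * w} ≃
        {p : ZMod (ℓ ^ β) × ZMod (ℓ ^ β) //
          p.1 * p.2 = (ℓ : ZMod (ℓ ^ β)) * (i4 * (w - (ℓ : ZMod (ℓ ^ β)) * y ^ 2))} :=
      Equiv.subtypeEquivRight (fun p => by rw [hiff _ p, heq])
    rw [Nat.card_congr e, card_pairs_vone hp hβ hw', card_units_zmod hp hβ]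
  rw [part1, part2]

end T

def cvEquiv {R : Type*} [CommRing R] (i2 : R) (hkey : 2 * i2 = 1) :
    (R × R × R × R) ≃ (R × R × R × R) where
  toFun q := ((q.1 - q.2.1) * i2, q.2.2.1, q.2.2.2, q.1 - (q.1 - q.2.1) * i2)
  invFun v := (v.1 + v.2.2.2, v.2.2.2 - v.1, v.2.1, v.2.2.1)
  left_inv q := by
    obtain ⟨t, x, b, c⟩ := q
    exact Prod.ext (by ring) (Prod.ext (by linear_combination (x - t) * hkey) rfl)
  right_inv v := by
    obtain ⟨a, b, c, e⟩ := v
    exact Prod.ext (by linear_combination a * hkey)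
      (Prod.ext rfl (Prod.ext rfl (by linear_combination (-a) * hkey)))

def tupleToMatrix {R : Type*} : (R × R × R × R) ≃ Matrix (Fin 2) (Fin 2) R where
  toFun p := !![p.1, p.2.1; p.2.2.1, p.2.2.2]
  invFun A := (A 0 0, A 0 1, A 1 0, A 1 1)
  left_inv p := by simp
  right_inv A := (Matrix.eta_fin_two A).symm

section A
variable {ℓ β : ℕ} (hp : ℓ.Prime) (hℓ2 : ℓ ≠ 2) (hβ : 2 ≤ β)
include hp hβ

lemma sq_unit_iff {t s : ZMod (ℓ ^ β)} (hs : (ℓ : ZMod (ℓ ^ β)) ∣ s) :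
    IsUnit (t ^ 2 - s) ↔ IsUnit t := by
  haveI : NeZero (ℓ ^ β) := ⟨pow_ne_zero _ hp.pos.ne'⟩
  rw [unit_iff' hp hβ, unit_iff' hp hβ]
  suffices hiff : ((ℓ : ZMod (ℓ ^ β)) ∣ t ^ 2 - s ↔ (ℓ : ZMod (ℓ ^ β)) ∣ t) by rw [hiff]
  constructor
  · intro h
    have h2 : (ℓ : ZMod (ℓ ^ β)) ∣ t ^ 2 := by
      have h3 := dvd_add h hs
      simpa using h3
    rw [cast_dvd_iff hp hβ] at h2 ⊢
    have h3 : t ^ 2 = ((t.val ^ 2 : ℕ) : ZMod (ℓ ^ β)) := by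
      push_cast
      rw [ZMod.natCast_val, ZMod.cast_id]
    rw [h3, ZMod.val_natCast, Nat.dvd_mod_iff (dvd_pow_self ℓ (by omega : β ≠ 0))] at h2
    exact hp.dvd_of_dvd_pow h2
  · intro h
    exact dvd_sub (dvd_pow h two_ne_zero) hs

include hℓ2

lemma cardA {w : ZMod (ℓ ^ β)} (hw : IsUnit w) :
    Nat.card {g : Matrix.GeneralLinearGroup (Fin 2) (ZMod (ℓ ^ β)) //
        (Matrix.trace (g : Matrix (Fin 2) (Fin 2) (ZMod (ℓ ^ β)))) ^ 2 -
          4 * Matrix.det (g : Matrix (Fin 2) (Fin 2) (ZMod (ℓ ^ β))) =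
            (ℓ : ZMod (ℓ ^ β)) * w} =
      (ℓ ^ (β - 1) * (ℓ - 1)) *
        ((ℓ ^ (β - 1) * (ℓ - 1)) * (ℓ ^ (β - 1) * (ℓ - 1)) +
          ℓ ^ (β - 1) * (2 * (ℓ ^ (β - 1) * (ℓ - 1)))) := by
  haveI : NeZero (ℓ ^ β) := ⟨pow_ne_zero _ hp.pos.ne'⟩
  have h2u := two_unit hp hβ hℓ2
  have hkey : (2 : ZMod (ℓ ^ β)) * ↑h2u.unit⁻¹ = 1 := Units.mul_inv_of_eq h2u.unit_spec
  set i2 : ZMod (ℓ ^ β) := ↑h2u.unit⁻¹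
  set s : ZMod (ℓ ^ β) := (ℓ : ZMod (ℓ ^ β)) * w with hs
  have e1 : {g : Matrix.GeneralLinearGroup (Fin 2) (ZMod (ℓ ^ β)) //
        (Matrix.trace (g : Matrix (Fin 2) (Fin 2) (ZMod (ℓ ^ β)))) ^ 2 -
          4 * Matrix.det (g : Matrix (Fin 2) (Fin 2) (ZMod (ℓ ^ β))) = s} ≃
      {A : Matrix (Fin 2) (Fin 2) (ZMod (ℓ ^ β)) //
        IsUnit A ∧ (Matrix.trace A) ^ 2 - 4 * Matrix.det A = s} :=
    unitsEquivSubtype (fun A : Matrix (Fin 2) (Fin 2) (ZMod (ℓ ^ β)) =>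
      (Matrix.trace A) ^ 2 - 4 * Matrix.det A = s)
  have e2 : {A : Matrix (Fin 2) (Fin 2) (ZMod (ℓ ^ β)) //
        IsUnit A ∧ (Matrix.trace A) ^ 2 - 4 * Matrix.det A = s} ≃
      {A : Matrix (Fin 2) (Fin 2) (ZMod (ℓ ^ β)) //
        IsUnit A.det ∧ (Matrix.trace A) ^ 2 - 4 * Matrix.det A = s} :=
    Equiv.subtypeEquivRight (fun A => and_congr_left' (Matrix.isUnit_iff_isUnit_det A))
  have e3 : {v : ZMod (ℓ ^ β) × ZMod (ℓ ^ β) × ZMod (ℓ ^ β) × ZMod (ℓ ^ β) //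
        IsUnit (v.1 * v.2.2.2 - v.2.1 * v.2.2.1) ∧
          (v.1 + v.2.2.2) ^ 2 - 4 * (v.1 * v.2.2.2 - v.2.1 * v.2.2.1) = s} ≃
      {A : Matrix (Fin 2) (Fin 2) (ZMod (ℓ ^ β)) //
        IsUnit A.det ∧ (Matrix.trace A) ^ 2 - 4 * Matrix.det A = s} :=
    Equiv.subtypeEquiv tupleToMatrix (fun v => by
      simp [tupleToMatrix, Matrix.det_fin_two_of, Matrix.trace_fin_two_of])
  have e4 : {q : ZMod (ℓ ^ β) × ZMod (ℓ ^ β) × ZMod (ℓ ^ β) × ZMod (ℓ ^ β) //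
        IsUnit q.1 ∧ q.2.1 ^ 2 + 4 * (q.2.2.1 * q.2.2.2) = s} ≃
      {v : ZMod (ℓ ^ β) × ZMod (ℓ ^ β) × ZMod (ℓ ^ β) × ZMod (ℓ ^ β) //
        IsUnit (v.1 * v.2.2.2 - v.2.1 * v.2.2.1) ∧
          (v.1 + v.2.2.2) ^ 2 - 4 * (v.1 * v.2.2.2 - v.2.1 * v.2.2.1) = s} := by
    refine Equiv.subtypeEquiv (cvEquiv i2 hkey) (fun q => ?_)
    obtain ⟨t, x, b, c⟩ := q
    simp only [cvEquiv, Equiv.coe_fn_mk]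
    set a : ZMod (ℓ ^ β) := (t - x) * i2 with ha
    set e : ZMod (ℓ ^ β) := t - (t - x) * i2 with he
    have hdisc : (a + e) ^ 2 - 4 * (a * e - b * c) = x ^ 2 + 4 * (b * c) := by
      rw [ha, he]
      linear_combination (2 * (t - x) ^ 2 * i2 - (t ^ 2 - x ^ 2)) * hkey
    have hdet4 : (4 : ZMod (ℓ ^ β)) * (a * e - b * c) =
        t ^ 2 - (x ^ 2 + 4 * (b * c)) := by
      rw [ha, he]
      linear_combination ((t ^ 2 - x ^ 2) - 2 * (t - x) ^ 2 * i2) * hkey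
    constructor
    · rintro ⟨ht, hx⟩
      refine ⟨?_, by rw [hdisc, hx]⟩
      have h5 : IsUnit (t ^ 2 - s) := (sq_unit_iff hp hβ ⟨w, rfl⟩).mpr ht
      rw [← hx, ← hdet4] at h5
      exact isUnit_of_mul_isUnit_right h5
    · rintro ⟨hu, hd⟩
      have hx : x ^ 2 + 4 * (b * c) = s := by rw [← hdisc, hd]
      refine ⟨?_, hx⟩
      have h5 : IsUnit ((4 : ZMod (ℓ ^ β)) * (a * e - b * c)) :=
        (four_unit hp hβ hℓ2).mul hu
      rw [hdet4, hx] at h5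
      exact (sq_unit_iff hp hβ ⟨w, rfl⟩).mp h5
  rw [Nat.card_congr (e1.trans (e2.trans (e3.symm.trans e4.symm)))]
  rw [card_sigma_eq (fun t : ZMod (ℓ ^ β) => IsUnit t)
    (fun (t : ZMod (ℓ ^ β)) (q : ZMod (ℓ ^ β) × ZMod (ℓ ^ β) × ZMod (ℓ ^ β)) =>
      q.1 ^ 2 + 4 * (q.2.1 * q.2.2) = s)
    ((ℓ ^ (β - 1) * (ℓ - 1)) * (ℓ ^ (β - 1) * (ℓ - 1)) +
      ℓ ^ (β - 1) * (2 * (ℓ ^ (β - 1) * (ℓ - 1))))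
    (fun t _ => cardT hp hℓ2 hβ hw)]
  rw [card_isUnit_zmod hp hβ]

end A

lemma card_sigma_eq' {α γ : Type*} [Fintype α] [Fintype γ] (Q : α → γ → Prop)
    (n : ℕ) (h : ∀ a, Nat.card {y // Q a y} = n) :
    Nat.card {p : α × γ // Q p.1 p.2} = Nat.card α * n := by
  classical
  have e : {p : α × γ // Q p.1 p.2} ≃ {p : α × γ // (fun _ => True) p.1 ∧ Q p.1 p.2} :=
    Equiv.subtypeEquivRight (fun p => by simp)
  rw [Nat.card_congr e, card_sigma_eq (fun _ : α => True) Q n (fun a _ => h a)]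
  congr 1
  exact Nat.card_congr (Equiv.subtypeUnivEquiv (fun _ => trivial))

noncomputable def affineUnitEquiv {R : Type*} [CommRing R] {u : R} (hu : IsUnit u) (v : R) :
    {e : R // IsUnit (u * e + v)} ≃ {d : R // IsUnit d} where
  toFun e := ⟨u * e.1 + v, e.2⟩
  invFun d := ⟨(↑hu.unit⁻¹ : R) * (d.1 - v), by
    have hukey : u * (↑hu.unit⁻¹ : R) = 1 := Units.mul_inv_of_eq hu.unit_spec
    have heq : u * ((↑hu.unit⁻¹ : R) * (d.1 - v)) + v = d.1 := by
      linear_combination (d.1 - v) * hukey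
    rw [heq]
    exact d.2⟩
  left_inv e := by
    have hukey : u * (↑hu.unit⁻¹ : R) = 1 := Units.mul_inv_of_eq hu.unit_spec
    exact Subtype.ext (by linear_combination e.1 * hukey)
  right_inv d := by
    have hukey : u * (↑hu.unit⁻¹ : R) = 1 := Units.mul_inv_of_eq hu.unit_spec
    exact Subtype.ext (by linear_combination (d.1 - v) * hukey)

def tupleToMatrix2 {R : Type*} : ((R × R) × (R × R)) ≃ Matrix (Fin 2) (Fin 2) R where
  toFun p := !![p.1.1, p.2.1; p.1.2, p.2.2]
  invFun A := ((A 0 0, A 1 0), (A 0 1, A 1 1))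
  left_inv p := by simp
  right_inv A := (Matrix.eta_fin_two A).symm

section GLCard
variable {ℓ β : ℕ} (hp : ℓ.Prime) (hβ : 2 ≤ β)
include hp hβ

lemma card_affine_unit {u : ZMod (ℓ ^ β)} (hu : IsUnit u) (v : ZMod (ℓ ^ β)) :
    Nat.card {e : ZMod (ℓ ^ β) // IsUnit (u * e + v)} = ℓ ^ (β - 1) * (ℓ - 1) := by
  rw [Nat.card_congr (affineUnitEquiv hu v)]
  exact card_isUnit_zmod hp hβ

lemma fiber_GL {a c : ZMod (ℓ ^ β)} (h : IsUnit a ∨ IsUnit c) :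
    Nat.card {be : ZMod (ℓ ^ β) × ZMod (ℓ ^ β) // IsUnit (a * be.2 - be.1 * c)} =
      ℓ ^ β * (ℓ ^ (β - 1) * (ℓ - 1)) := by
  haveI : NeZero (ℓ ^ β) := ⟨pow_ne_zero _ hp.pos.ne'⟩
  rcases h with ha | hc
  · rw [card_sigma_eq' (fun (b : ZMod (ℓ ^ β)) (e : ZMod (ℓ ^ β)) =>
      IsUnit (a * e - b * c)) (ℓ ^ (β - 1) * (ℓ - 1)) ?_, Nat.card_zmod]
    intro b
    have e1 : {e : ZMod (ℓ ^ β) // IsUnit (a * e - b * c)} ≃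
        {e : ZMod (ℓ ^ β) // IsUnit (a * e + (-(b * c)))} :=
      Equiv.subtypeEquivRight (fun e => by rw [sub_eq_add_neg])
    rw [Nat.card_congr e1]
    exact card_affine_unit hp hβ ha _
  · have e0 : {be : ZMod (ℓ ^ β) × ZMod (ℓ ^ β) // IsUnit (a * be.2 - be.1 * c)} ≃
        {p : ZMod (ℓ ^ β) × ZMod (ℓ ^ β) // IsUnit (a * p.1 - p.2 * c)} :=
      Equiv.subtypeEquiv (Equiv.prodComm _ _) (fun p => by simp)
    rw [Nat.card_congr e0]
    rw [card_sigma_eq' (fun (e : ZMod (ℓ ^ β)) (b : ZMod (ℓ ^ β)) =>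
      IsUnit (a * e - b * c)) (ℓ ^ (β - 1) * (ℓ - 1)) ?_, Nat.card_zmod]
    intro e
    have e1 : {b : ZMod (ℓ ^ β) // IsUnit (a * e - b * c)} ≃
        {b : ZMod (ℓ ^ β) // IsUnit ((-c) * b + a * e)} :=
      Equiv.subtypeEquivRight (fun b => by ring_nf)
    rw [Nat.card_congr e1]
    exact card_affine_unit hp hβ hc.neg _

lemma cardGL :
    Nat.card (Matrix.GeneralLinearGroup (Fin 2) (ZMod (ℓ ^ β))) =
      (ℓ ^ β * ℓ ^ β - ℓ ^ (β - 1) * ℓ ^ (β - 1)) *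
        (ℓ ^ β * (ℓ ^ (β - 1) * (ℓ - 1))) := by
  haveI : NeZero (ℓ ^ β) := ⟨pow_ne_zero _ hp.pos.ne'⟩
  have e1 : Matrix.GeneralLinearGroup (Fin 2) (ZMod (ℓ ^ β)) ≃
      {A : Matrix (Fin 2) (Fin 2) (ZMod (ℓ ^ β)) // IsUnit A} :=
    (isUnitEquivUnits (M := Matrix (Fin 2) (Fin 2) (ZMod (ℓ ^ β)))).symm
  have e2 : {A : Matrix (Fin 2) (Fin 2) (ZMod (ℓ ^ β)) // IsUnit A} ≃
      {A : Matrix (Fin 2) (Fin 2) (ZMod (ℓ ^ β)) // IsUnit A.det} :=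
    Equiv.subtypeEquivRight (fun A => Matrix.isUnit_iff_isUnit_det A)
  have e3 : {p : (ZMod (ℓ ^ β) × ZMod (ℓ ^ β)) × (ZMod (ℓ ^ β) × ZMod (ℓ ^ β)) //
        IsUnit (p.1.1 * p.2.2 - p.2.1 * p.1.2)} ≃
      {A : Matrix (Fin 2) (Fin 2) (ZMod (ℓ ^ β)) // IsUnit A.det} :=
    Equiv.subtypeEquiv tupleToMatrix2 (fun p => by
      simp [tupleToMatrix2, Matrix.det_fin_two_of])
  rw [Nat.card_congr (e1.trans (e2.trans e3.symm))]
  rw [card_split (fun p : (ZMod (ℓ ^ β) × ZMod (ℓ ^ β)) × (ZMod (ℓ ^ β) × ZMod (ℓ ^ β)) =>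
    IsUnit p.1.1 ∨ IsUnit p.1.2)]
  have hneg : Nat.card {p : (ZMod (ℓ ^ β) × ZMod (ℓ ^ β)) × (ZMod (ℓ ^ β) × ZMod (ℓ ^ β)) //
      ¬ (IsUnit p.1.1 ∨ IsUnit p.1.2) ∧ IsUnit (p.1.1 * p.2.2 - p.2.1 * p.1.2)} = 0 := by
    rw [Nat.card_eq_zero]
    left
    rw [isEmpty_subtype]
    rintro ⟨⟨a, c⟩, ⟨b, e⟩⟩ ⟨hno, hu⟩
    push_neg at hno
    obtain ⟨hna, hnc⟩ := hno
    rw [unit_iff' hp hβ] at hna hnc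
    push_neg at hna hnc
    have hdvd : (ℓ : ZMod (ℓ ^ β)) ∣ a * e - b * c := by
      obtain ⟨a', rfl⟩ := hna
      obtain ⟨c', rfl⟩ := hnc
      exact ⟨a' * e - b * c', by ring⟩
    exact (unit_iff' hp hβ _).mp hu hdvd
  have hpos : Nat.card {p : (ZMod (ℓ ^ β) × ZMod (ℓ ^ β)) × (ZMod (ℓ ^ β) × ZMod (ℓ ^ β)) //
      (IsUnit p.1.1 ∨ IsUnit p.1.2) ∧ IsUnit (p.1.1 * p.2.2 - p.2.1 * p.1.2)} =
      (ℓ ^ β * ℓ ^ β - ℓ ^ (β - 1) * ℓ ^ (β - 1)) *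
        (ℓ ^ β * (ℓ ^ (β - 1) * (ℓ - 1))) := by
    rw [card_sigma_eq
      (fun ac : ZMod (ℓ ^ β) × ZMod (ℓ ^ β) => IsUnit ac.1 ∨ IsUnit ac.2)
      (fun (ac : ZMod (ℓ ^ β) × ZMod (ℓ ^ β)) (be : ZMod (ℓ ^ β) × ZMod (ℓ ^ β)) =>
        IsUnit (ac.1 * be.2 - be.1 * ac.2))
      (ℓ ^ β * (ℓ ^ (β - 1) * (ℓ - 1)))
      (fun ac hac => fiber_GL hp hβ hac)]
    congr 1
    -- card of pairs with at least one unit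
    classical
    have h1 : Nat.card {ac : ZMod (ℓ ^ β) × ZMod (ℓ ^ β) //
        ¬ (IsUnit ac.1 ∨ IsUnit ac.2)} = ℓ ^ (β - 1) * ℓ ^ (β - 1) := by
      have e4 : {ac : ZMod (ℓ ^ β) × ZMod (ℓ ^ β) // ¬ (IsUnit ac.1 ∨ IsUnit ac.2)} ≃
          {ac : ZMod (ℓ ^ β) × ZMod (ℓ ^ β) // ¬ IsUnit ac.1 ∧ ¬ IsUnit ac.2} :=
        Equiv.subtypeEquivRight (fun ac => by tauto)
      rw [Nat.card_congr (e4.trans (Equiv.subtypeProdEquivProd (p := fun a : ZMod (ℓ ^ β) => ¬ IsUnit a) (q := fun c : ZMod (ℓ ^ β) => ¬ IsUnit c))), Nat.card_prod,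
        card_nonunit_zmod hp hβ]
    have htot : Nat.card {ac : ZMod (ℓ ^ β) × ZMod (ℓ ^ β) //
          IsUnit ac.1 ∨ IsUnit ac.2} +
        Nat.card {ac : ZMod (ℓ ^ β) × ZMod (ℓ ^ β) // ¬ (IsUnit ac.1 ∨ IsUnit ac.2)} =
          ℓ ^ β * ℓ ^ β := by
      rw [Nat.card_eq_fintype_card, Nat.card_eq_fintype_card, Fintype.card_subtype_compl]
      have hle : Fintype.card {ac : ZMod (ℓ ^ β) × ZMod (ℓ ^ β) //
          IsUnit ac.1 ∨ IsUnit ac.2} ≤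
          Fintype.card (ZMod (ℓ ^ β) × ZMod (ℓ ^ β)) := Fintype.card_subtype_le _
      have hcp : Fintype.card (ZMod (ℓ ^ β) × ZMod (ℓ ^ β)) = ℓ ^ β * ℓ ^ β := by
        rw [Fintype.card_prod, ZMod.card]
      omega
    omega
  rw [hpos, hneg]
  omega

end GLCard

section Assembly
variable {ℓ β : ℕ} (hp : ℓ.Prime) (hℓ2 : ℓ ≠ 2) (hβ : 2 ≤ β)
include hp hβ

lemma ell_dvd_val {r : ℤ} (hr : (ℓ : ℤ) ∣ r) {α : ℕ} (hα : 1 ≤ α)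
    {s : ZMod (ℓ ^ β)} (h2 : ((s.val : ℤ)) ≡ r [ZMOD ((ℓ : ℤ) ^ α)]) :
    ℓ ∣ s.val := by
  have h3 : ((ℓ : ℤ) ^ α) ∣ (r - (s.val : ℤ)) := Int.ModEq.dvd h2
  have h4 : (ℓ : ℤ) ∣ (r - (s.val : ℤ)) :=
    (dvd_pow_self (ℓ : ℤ) (by omega : α ≠ 0)).trans h3
  have h5 : (ℓ : ℤ) ∣ (s.val : ℤ) := by
    have h6 := dvd_sub hr h4
    simpa using h6
  exact_mod_cast h5

include hℓ2

lemma fiber_count {r : ℤ} (hr : (ℓ : ℤ) ∣ r) {α : ℕ} (hα : 1 ≤ α)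
    (s : ZMod (ℓ ^ β)) (h1 : ¬ ℓ ^ 2 ∣ s.val)
    (h2 : ((s.val : ℤ)) ≡ r [ZMOD ((ℓ : ℤ) ^ α)]) :
    Nat.card {g : Matrix.GeneralLinearGroup (Fin 2) (ZMod (ℓ ^ β)) //
        glDisc (ℓ ^ β) g = s} =
      (ℓ ^ (β - 1) * (ℓ - 1)) *
        ((ℓ ^ (β - 1) * (ℓ - 1)) * (ℓ ^ (β - 1) * (ℓ - 1)) +
          ℓ ^ (β - 1) * (2 * (ℓ ^ (β - 1) * (ℓ - 1)))) := by
  have hdvd : ℓ ∣ s.val := ell_dvd_val hp hβ hr hα h2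
  obtain ⟨u, hsu⟩ := exists_unit_rep hp hβ hdvd h1
  rw [hsu]
  exact cardA hp hℓ2 hβ u.isUnit

end Assembly

section SCount
variable {ℓ β : ℕ} (hp : ℓ.Prime)
include hp

lemma cardS1 (hβ : β = 2) {r : ℤ} (hr : (ℓ : ℤ) ∣ r) :
    Nat.card {s : ZMod (ℓ ^ β) //
        ¬ (ℓ ^ 2 ∣ s.val) ∧ ((s.val : ℤ)) ≡ r [ZMOD ((ℓ : ℤ) ^ 1)]} = ℓ - 1 := by
  classical
  haveI : NeZero (ℓ ^ β) := ⟨pow_ne_zero _ hp.pos.ne'⟩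
  haveI : NeZero ℓ := ⟨hp.pos.ne'⟩
  have hval_lt : ∀ s : ZMod (ℓ ^ β), s.val < ℓ * ℓ := by
    intro s
    exact lt_of_lt_of_eq s.val_lt (by rw [hβ]; ring)
  have hcond : ∀ s : ZMod (ℓ ^ β),
      (¬ (ℓ ^ 2 ∣ s.val) ∧ ((s.val : ℤ)) ≡ r [ZMOD ((ℓ : ℤ) ^ 1)]) ↔
        (ℓ ∣ s.val ∧ s.val ≠ 0) := by
    intro s
    constructor
    · rintro ⟨h1, h2⟩
      refine ⟨ell_dvd_val hp (by omega) hr le_rfl h2, ?_⟩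
      intro h0
      exact h1 (h0 ▸ dvd_zero _)
    · rintro ⟨h1, h0⟩
      constructor
      · intro h2
        exact h0 (Nat.eq_zero_of_dvd_of_lt h2 (lt_of_lt_of_eq s.val_lt (by rw [hβ])))
      · rw [pow_one, Int.modEq_iff_dvd]
        obtain ⟨k, hk⟩ := h1
        obtain ⟨m, hm⟩ := hr
        rw [hm, hk]
        push_cast
        exact ⟨m - k, by ring⟩
  have e0 : {s : ZMod (ℓ ^ β) //
        ¬ (ℓ ^ 2 ∣ s.val) ∧ ((s.val : ℤ)) ≡ r [ZMOD ((ℓ : ℤ) ^ 1)]} ≃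
      {s : ZMod (ℓ ^ β) // ℓ ∣ s.val ∧ s.val ≠ 0} :=
    Equiv.subtypeEquivRight hcond
  have hmod : ∀ k : Fin ℓ, ((ℓ * k.val : ℕ) : ZMod (ℓ ^ β)).val = ℓ * k.val := by
    intro k
    rw [ZMod.val_natCast, Nat.mod_eq_of_lt]
    rw [hβ, sq]
    exact mul_lt_mul_of_pos_left k.isLt hp.pos
  have e1 : {k : Fin ℓ // k.val ≠ 0} ≃ {s : ZMod (ℓ ^ β) // ℓ ∣ s.val ∧ s.val ≠ 0} :=
    { toFun := fun k => ⟨((ℓ * k.1.val : ℕ) : ZMod (ℓ ^ β)), by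
        rw [hmod k.1]
        exact Dvd.intro _ rfl, by
        rw [hmod k.1]
        exact Nat.mul_ne_zero hp.pos.ne' k.2⟩
      invFun := fun s => ⟨⟨s.1.val / ℓ, by
        rw [Nat.div_lt_iff_lt_mul hp.pos]
        exact hval_lt s.1⟩, by
        show s.1.val / ℓ ≠ 0
        intro h
        apply s.2.2
        have h2 := Nat.mul_div_cancel' s.2.1
        rw [h] at h2
        simpa using h2.symm⟩
      left_inv := fun k => by
        apply Subtype.ext
        apply Fin.ext
        show (((ℓ * k.1.val : ℕ) : ZMod (ℓ ^ β)).val) / ℓ = k.1.val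
        rw [hmod k.1, Nat.mul_div_cancel_left _ hp.pos]
      right_inv := fun s => by
        apply Subtype.ext
        show ((ℓ * (s.1.val / ℓ) : ℕ) : ZMod (ℓ ^ β)) = s.1
        rw [Nat.mul_div_cancel' s.2.1, ZMod.natCast_val, ZMod.cast_id] }
  rw [Nat.card_congr (e0.trans e1.symm), Nat.card_eq_fintype_card]
  have hsplit : Fintype.card {k : Fin ℓ // ¬ (k.val = 0)} =
      Fintype.card (Fin ℓ) - Fintype.card {k : Fin ℓ // k.val = 0} :=
    Fintype.card_subtype_compl _
  have h01 : Fintype.card {k : Fin ℓ // k.val = 0} = 1 := by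
    have e2 : {k : Fin ℓ // k.val = 0} ≃ {k : Fin ℓ // k = 0} :=
      Equiv.subtypeEquivRight (fun k => by
        rw [Fin.ext_iff, Fin.val_zero])
    rw [Fintype.card_congr e2, Fintype.card_subtype_eq]
  have : Fintype.card {k : Fin ℓ // k.val ≠ 0} =
      Fintype.card {k : Fin ℓ // ¬ (k.val = 0)} := rfl
  rw [this, hsplit, h01, Fintype.card_fin]

lemma cardS2 (hβ : 2 ≤ β) {r : ℤ} {α : ℕ} (hα2 : 2 ≤ α) (hβα : β = α)
    (hr2 : ¬ ((ℓ : ℤ) ^ 2 ∣ r)) :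
    Nat.card {s : ZMod (ℓ ^ β) //
        ¬ (ℓ ^ 2 ∣ s.val) ∧ ((s.val : ℤ)) ≡ r [ZMOD ((ℓ : ℤ) ^ α)]} = 1 := by
  classical
  haveI : NeZero (ℓ ^ β) := ⟨pow_ne_zero _ hp.pos.ne'⟩
  have hmodcast : ((ℓ ^ β : ℕ) : ℤ) = (ℓ : ℤ) ^ α := by
    rw [hβα]; push_cast; ring
  have hcond : ∀ s : ZMod (ℓ ^ β),
      (¬ (ℓ ^ 2 ∣ s.val) ∧ ((s.val : ℤ)) ≡ r [ZMOD ((ℓ : ℤ) ^ α)]) ↔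
        s = ((r : ℤ) : ZMod (ℓ ^ β)) := by
    intro s
    have hiff : (((s.val : ℤ)) ≡ r [ZMOD ((ℓ : ℤ) ^ α)]) ↔ s = ((r : ℤ) : ZMod (ℓ ^ β)) := by
      rw [← hmodcast]
      rw [← ZMod.intCast_eq_intCast_iff]
      constructor
      · intro h
        rw [← h]
        push_cast
        rw [ZMod.natCast_val, ZMod.cast_id]
      · intro h
        rw [← h]
        push_cast
        rw [ZMod.natCast_val, ZMod.cast_id]
    constructor
    · rintro ⟨_, h2⟩
      exact hiff.mp h2
    · intro h
      refine ⟨?_, hiff.mpr h⟩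
      intro h2
      apply hr2
      have h3 : ((ℓ : ℤ) ^ α) ∣ (r - (s.val : ℤ)) := Int.ModEq.dvd (hiff.mpr h)
      have h4 : ((ℓ : ℤ) ^ 2) ∣ (r - (s.val : ℤ)) :=
        (pow_dvd_pow (ℓ : ℤ) hα2).trans h3
      have h5 : ((ℓ : ℤ) ^ 2) ∣ (s.val : ℤ) := by
        have := h2
        exact_mod_cast (by exact_mod_cast this : ((ℓ ^ 2 : ℕ) : ℤ) ∣ ((s.val : ℕ) : ℤ))
      have h6 := dvd_add h4 h5
      simpa using h6
  have e0 : {s : ZMod (ℓ ^ β) //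
        ¬ (ℓ ^ 2 ∣ s.val) ∧ ((s.val : ℤ)) ≡ r [ZMOD ((ℓ : ℤ) ^ α)]} ≃
      {s : ZMod (ℓ ^ β) // s = ((r : ℤ) : ZMod (ℓ ^ β))} :=
    Equiv.subtypeEquivRight hcond
  rw [Nat.card_congr e0, Nat.card_eq_fintype_card, Fintype.card_subtype_eq]

end SCount

/-- for an odd prime `ℓ`, `r` with `ℓ | r` and `α ≥ 1`:
(i) if `α = 1` the proportion is `(ℓ-1)/ℓ²`;
(ii) if `α ≥ 2` and `ℓ² ∤ r` the proportion is `1/ℓ^α`;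
(iii) if `α ≥ 2` and `ℓ² | r` then `N(ℓ,r,α) = 0`. -/
theorem stmt19 (ℓ : ℕ) (hℓ : ℓ.Prime) (hℓ2 : ℓ ≠ 2) (r : ℤ) (hr : (ℓ : ℤ) ∣ r)
    (α : ℕ) (hα : 1 ≤ α) :
    (α = 1 →
      (glCount ℓ r α : ℝ) /
          (Nat.card (Matrix.GeneralLinearGroup (Fin 2) (ZMod (ℓ ^ max α 2))) : ℝ) =
        ((ℓ : ℝ) - 1) / (ℓ : ℝ) ^ 2) ∧
    (2 ≤ α → ¬ ((ℓ : ℤ) ^ 2 ∣ r) →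
      (glCount ℓ r α : ℝ) /
          (Nat.card (Matrix.GeneralLinearGroup (Fin 2) (ZMod (ℓ ^ max α 2))) : ℝ) =
        1 / (ℓ : ℝ) ^ α) ∧
    (2 ≤ α → (ℓ : ℤ) ^ 2 ∣ r → glCount ℓ r α = 0) := by
  have hβ2 : 2 ≤ max α 2 := le_max_right _ _
  haveI : NeZero (ℓ ^ max α 2) := ⟨pow_ne_zero _ hℓ.pos.ne'⟩
  have hℓ1 : 1 ≤ ℓ := hℓ.pos
  have hGLpos : 0 < Nat.card (Matrix.GeneralLinearGroup (Fin 2) (ZMod (ℓ ^ max α 2))) :=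
    Nat.card_pos
  have hcount : glCount ℓ r α =
      Nat.card {s : ZMod (ℓ ^ max α 2) //
          ¬ (ℓ ^ 2 ∣ s.val) ∧ ((s.val : ℤ)) ≡ r [ZMOD ((ℓ : ℤ) ^ α)]} *
        ((ℓ ^ (max α 2 - 1) * (ℓ - 1)) *
          ((ℓ ^ (max α 2 - 1) * (ℓ - 1)) * (ℓ ^ (max α 2 - 1) * (ℓ - 1)) +
            ℓ ^ (max α 2 - 1) * (2 * (ℓ ^ (max α 2 - 1) * (ℓ - 1))))) := by
    unfold glCount
    exact card_fiber_partition (glDisc (ℓ ^ max α 2))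
      (fun s : ZMod (ℓ ^ max α 2) =>
        ¬ (ℓ ^ 2 ∣ s.val) ∧ ((s.val : ℤ)) ≡ r [ZMOD ((ℓ : ℤ) ^ α)]) _
      (fun s hs => fiber_count hℓ hℓ2 hβ2 hr hα s hs.1 hs.2)
  have hGL := cardGL (β := max α 2) hℓ hβ2
  refine ⟨?_, ?_, ?_⟩
  · -- case α = 1
    intro hα1
    subst hα1
    have hb : max 1 2 = 2 := by norm_num
    have hS := cardS1 (β := max 1 2) hℓ hb hr
    rw [hS] at hcount
    have key : glCount ℓ r 1 * ℓ ^ 2 =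
        Nat.card (Matrix.GeneralLinearGroup (Fin 2) (ZMod (ℓ ^ max 1 2))) * (ℓ - 1) := by
      rw [hcount, hGL]
      simp only [hb]
      have h21 : (2 : ℕ) - 1 = 1 := rfl
      rw [h21]
      have hle' : ℓ ^ 1 * ℓ ^ 1 ≤ ℓ ^ 2 * ℓ ^ 2 := by
        apply Nat.mul_le_mul <;> exact Nat.pow_le_pow_right hℓ.pos (by omega)
      zify [hle', hℓ1]
      ring
    rw [div_eq_div_iff (by exact_mod_cast hGLpos.ne') (by positivity)]
    have keyR := congrArg (fun n : ℕ => (n : ℝ)) key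
    push_cast [Nat.cast_sub hℓ1] at keyR
    linarith
  · -- case 2 ≤ α, ℓ² ∤ r
    intro hα2 hr2
    have hba : max α 2 = α := max_eq_left hα2
    have hS := cardS2 (β := max α 2) hℓ hβ2 hα2 hba hr2
    rw [hS, one_mul] at hcount
    have key : glCount ℓ r α * ℓ ^ α =
        Nat.card (Matrix.GeneralLinearGroup (Fin 2) (ZMod (ℓ ^ max α 2))) := by
      rw [hcount, hGL]
      simp only [hba]
      have hc : ℓ ^ α = ℓ ^ (α - 1) * ℓ := by
        rw [← pow_succ]
        congr 1
        omega
      rw [hc]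
      have hle : ℓ ^ (α - 1) * ℓ ^ (α - 1) ≤ (ℓ ^ (α - 1) * ℓ) * (ℓ ^ (α - 1) * ℓ) := by
        have h7 : ℓ ^ (α - 1) ≤ ℓ ^ (α - 1) * ℓ := Nat.le_mul_of_pos_right _ hℓ.pos
        exact Nat.mul_le_mul h7 h7
      zify [hle, hℓ1]
      ring
    rw [div_eq_div_iff (by exact_mod_cast hGLpos.ne') (by positivity)]
    have keyR := congrArg (fun n : ℕ => (n : ℝ)) key
    push_cast at keyR
    linarith
  · -- case 2 ≤ α, ℓ² ∣ r
    intro hα2 hr2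
    unfold glCount
    rw [Nat.card_eq_zero]
    left
    rw [isEmpty_subtype]
    rintro g ⟨h1, h2⟩
    apply h1
    have h3 : ((ℓ : ℤ) ^ α) ∣ (r - ((glDisc (ℓ ^ max α 2) g).val : ℤ)) := Int.ModEq.dvd h2
    have h4 : ((ℓ : ℤ) ^ 2) ∣ (r - ((glDisc (ℓ ^ max α 2) g).val : ℤ)) :=
      (pow_dvd_pow (ℓ : ℤ) hα2).trans h3
    have h5 : ((ℓ : ℤ) ^ 2) ∣ ((glDisc (ℓ ^ max α 2) g).val : ℤ) := by
      have h6 := dvd_sub hr2 h4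
      simpa using h6
    exact_mod_cast h5
end
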